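/- arXiv:2007.14723 — 10 statements merged into one kernel-verified Lean document; each statement's English description precedes it below -/
import Mathlib

section
/- Let X and Y be infinite Tychonoff topological spaces such that the product X × Y is not pseudocompact. Then C_p(X × Y) contains a complemented copy of ℝ^ℕ (with the product topology), i.e., there exist continuous linear maps S : ℝ^ℕ → C_p(X × Y) and T : C_p(X × Y) → ℝ^ℕ with T ∘ S = id. -/
open Filter Topology

/-- A topological space is pseudocompact if every continuous real-valued function on it
is bounded. -/
def Pseudocompact (X : Type*) [TopologicalSpace X] : Prop :=
  ∀ f : X → ℝ, Continuous f → ∃ M : ℝ, ∀ x, |f x| ≤ M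

/-- `C_p(X)`: the submodule of `ℝ^X` consisting of continuous functions; as a subtype it
carries the topology of pointwise convergence. -/
def Cp (X : Type*) [TopologicalSpace X] : Submodule ℝ (X → ℝ) where
  carrier := {f | Continuous f}
  add_mem' hf hg := hf.add hg
  zero_mem' := continuous_const
  smul_mem' c f hf := hf.const_smul c

/-- `E` contains a complemented copy of `F`: there are continuous linear maps
`S : F → E` and `T : E → F` with `T ∘ S = id`. -/
def HasComplementedCopy (E F : Type*) [AddCommGroup E] [Module ℝ E] [TopologicalSpace E]
    [AddCommGroup F] [Module ℝ F] [TopologicalSpace F] : Prop :=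
  ∃ (S : F →ₗ[ℝ] E) (T : E →ₗ[ℝ] F), Continuous S ∧ Continuous T ∧ ∀ y, T (S y) = y

/-!
A continuous `f : Z → ℝ` that is unbounded above yields points `z n` with
`f (z n) + 1 ≤ f (z (n + 1))`. The tents of radius `1` centred at the values `f (z n)` have
locally finite supports and each vanishes at the other centres, so
`a ↦ (x ↦ ∑ᶠ n, a n * tent (f (z n)) (f x))` is a continuous linear map `ℝ^ℕ → C_p(Z)` whose
left inverse is evaluation at the points `z n`.
-/

open Function Set

noncomputable def tent (c t : ℝ) : ℝ := max 0 (1 - |t - c|)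

lemma continuous_tent (c : ℝ) : Continuous (tent c) := by
  unfold tent; fun_prop

@[simp] lemma tent_self (c : ℝ) : tent c c = 1 := by simp [tent]

lemma tent_eq_zero {c t : ℝ} (h : 1 ≤ |t - c|) : tent c t = 0 :=
  max_eq_left (by linarith)

lemma abs_sub_lt_one_of_tent_ne_zero {c t : ℝ} (h : tent c t ≠ 0) : |t - c| < 1 :=
  lt_of_not_ge fun h' => h (tent_eq_zero h')

section TentSum

variable {s : ℕ → ℝ}

noncomputable def tentSum (s a : ℕ → ℝ) (t : ℝ) : ℝ := ∑ᶠ n, a n * tent (s n) t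

lemma locallyFinite_support_tent (hs : Tendsto s atTop atTop) :
    LocallyFinite fun n => support (tent (s n)) := by
  intro t
  refine ⟨Iio (t + 1), Iio_mem_nhds (lt_add_one t), ?_⟩
  have hfin : {n | s n < t + 2}.Finite := by
    simpa [← Nat.cofinite_eq_atTop] using hs.eventually_ge_atTop (t + 2)
  refine hfin.subset fun _ ⟨u, hu, hut⟩ => ?_
  show s _ < t + 2
  linarith [(abs_lt.mp (abs_sub_lt_one_of_tent_ne_zero hu)).1, mem_Iio.mp hut]

lemma exists_finset_tentSum_eq (hs : Tendsto s atTop atTop) (t : ℝ) :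
    ∃ I : Finset ℕ, ∀ a, tentSum s a t = ∑ n ∈ I, a n * tent (s n) t := by
  obtain ⟨I, hI⟩ := (locallyFinite_support_tent hs).exists_finset_support t
  exact ⟨I, fun a => finsum_eq_sum_of_support_subset _
    ((support_mul_subset_right _ _).trans hI.self_of_nhds)⟩

lemma continuous_tentSum (hs : Tendsto s atTop atTop) (a : ℕ → ℝ) :
    Continuous (tentSum s a) :=
  continuous_finsum (fun _ => continuous_const.mul (continuous_tent _))
    ((locallyFinite_support_tent hs).subset fun _ => support_mul_subset_right _ _)

lemma tentSum_add (hs : Tendsto s atTop atTop) (a b : ℕ → ℝ) :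
    tentSum s (a + b) = tentSum s a + tentSum s b := by
  funext t
  obtain ⟨I, hI⟩ := exists_finset_tentSum_eq hs t
  simp only [Pi.add_apply, hI, add_mul, Finset.sum_add_distrib]

lemma tentSum_smul (hs : Tendsto s atTop atTop) (c : ℝ) (a : ℕ → ℝ) :
    tentSum s (c • a) = c • tentSum s a := by
  funext t
  obtain ⟨I, hI⟩ := exists_finset_tentSum_eq hs t
  simp only [Pi.smul_apply, hI, smul_eq_mul, mul_assoc, Finset.mul_sum]

lemma continuous_tentSum_apply (hs : Tendsto s atTop atTop) (t : ℝ) :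
    Continuous fun a => tentSum s a t := by
  obtain ⟨I, hI⟩ := exists_finset_tentSum_eq hs t
  simp only [hI]
  fun_prop

lemma tentSum_apply_self (hs : Pairwise fun m n => 1 ≤ |s m - s n|) (a : ℕ → ℝ) (k : ℕ) :
    tentSum s a (s k) = a k := by
  rw [tentSum, finsum_eq_single _ k fun n hn => by rw [tent_eq_zero (hs hn.symm), mul_zero],
    tent_self, mul_one]

end TentSum

section Gaps

variable {s : ℕ → ℝ}

lemma add_le_of_add_one_le (hs : ∀ n, s n + 1 ≤ s (n + 1)) {m n : ℕ} (hmn : m ≤ n) :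
    s m + (n - m : ℕ) ≤ s n := by
  induction n, hmn using Nat.le_induction with
  | base => simp
  | succ n hmn ih =>
    rw [Nat.sub_add_comm hmn]
    push_cast
    linarith [hs n]

lemma tendsto_atTop_of_add_one_le (hs : ∀ n, s n + 1 ≤ s (n + 1)) :
    Tendsto s atTop atTop :=
  tendsto_atTop_mono (fun n => by simpa using add_le_of_add_one_le hs n.zero_le)
    (tendsto_atTop_add_const_left _ _ tendsto_natCast_atTop_atTop)

lemma pairwise_one_le_abs_sub_of_add_one_le (hs : ∀ n, s n + 1 ≤ s (n + 1)) :
    Pairwise fun m n => 1 ≤ |s m - s n| := by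
  have gap {m n : ℕ} (hmn : m < n) : s m + 1 ≤ s n := by
    have := add_le_of_add_one_le hs hmn.le
    have : (1 : ℝ) ≤ (n - m : ℕ) := by exact_mod_cast Nat.le_sub_of_add_le' hmn
    linarith
  intro m n hmn
  rcases hmn.lt_or_gt with h | h
  · exact le_abs.mpr (.inr (by linarith [gap h]))
  · exact le_abs.mpr (.inl (by linarith [gap h]))

end Gaps

lemma exists_seq_add_one_le_of_not_bddAbove {Z : Type*} {f : Z → ℝ} (hf : ¬BddAbove (range f)) :
    ∃ z : ℕ → Z, ∀ n, f (z n) + 1 ≤ f (z (n + 1)) := by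
  have : ∀ M, ∃ x, M < f x := by simpa [not_bddAbove_iff] using hf
  choose u hu using this
  exact ⟨fun n => Nat.rec (u 0) (fun _ x => u (f x + 1)) n, fun n => (hu _).le⟩

lemma exists_continuous_not_bddAbove_of_not_pseudocompact {Z : Type*} [TopologicalSpace Z]
    (hZ : ¬Pseudocompact Z) : ∃ f : Z → ℝ, Continuous f ∧ ¬BddAbove (range f) := by
  simp only [Pseudocompact, not_forall, not_exists, not_le] at hZ
  obtain ⟨f, hf, hunb⟩ := hZ
  exact ⟨fun x => |f x|, hf.abs, by simpa [not_bddAbove_iff] using hunb⟩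

theorem Cp.hasComplementedCopy_of_not_pseudocompact {Z : Type*} [TopologicalSpace Z]
    (hZ : ¬Pseudocompact Z) : HasComplementedCopy (Cp Z) (ℕ → ℝ) := by
  obtain ⟨f, hf, hunb⟩ := exists_continuous_not_bddAbove_of_not_pseudocompact hZ
  obtain ⟨z, hz⟩ := exists_seq_add_one_le_of_not_bddAbove hunb
  have hs : Tendsto (f ∘ z) atTop atTop := tendsto_atTop_of_add_one_le hz
  let S : (ℕ → ℝ) →ₗ[ℝ] Cp Z :=
    { toFun a := ⟨tentSum (f ∘ z) a ∘ f, (continuous_tentSum hs a).comp hf⟩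
      map_add' a b := by ext x; simp [tentSum_add hs]
      map_smul' c a := by ext x; simp [tentSum_smul hs] }
  let T : Cp Z →ₗ[ℝ] ℕ → ℝ :=
    { toFun g n := (g : Z → ℝ) (z n)
      map_add' _ _ := rfl
      map_smul' _ _ := rfl }
  refine ⟨S, T, ?_, ?_, fun a => funext fun n => ?_⟩
  · exact (continuous_pi fun x => continuous_tentSum_apply hs (f x)).subtype_mk _
  · exact continuous_pi fun n => (continuous_apply (z n)).comp continuous_subtype_val
  · exact tentSum_apply_self (pairwise_one_le_abs_sub_of_add_one_le hz) a n

theorem stmt1_general (X Y : Type*) [TopologicalSpace X] [TopologicalSpace Y]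
    (hpc : ¬ Pseudocompact (X × Y)) :
    HasComplementedCopy (↥(Cp (X × Y))) (ℕ → ℝ) :=
  Cp.hasComplementedCopy_of_not_pseudocompact hpc

theorem stmt1 (X Y : Type*) [TopologicalSpace X] [TopologicalSpace Y]
    [CompletelyRegularSpace X] [T2Space X] [CompletelyRegularSpace Y] [T2Space Y]
    [Infinite X] [Infinite Y]
    (hpc : ¬ Pseudocompact (X × Y)) :
    HasComplementedCopy (↥(Cp (X × Y))) (ℕ → ℝ) :=
  stmt1_general X Y hpc
end

section
/- Let X and Y be infinite Tychonoff spaces such that X × Y is pseudocompact. Then X × Y admits a JN-sequence (μ_n); moreover, (μ_n) can be chosen so that there are countable discrete subspaces D ⊆ X and E ⊆ Y with supp(μ_n) ⊆ D × E for every n, the projections of the supports supp(μ_n), n ∈ ℕ, onto X are pairwise disjoint, and the projections of the supports onto Y are pairwise disjoint. -/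
open Filter Topology

/-- A JN-sequence on a topological space `X`: a sequence of finitely supported signed
measures (modelled as finitely supported functions `X →₀ ℝ`) of norm one converging to `0`
on every continuous real-valued function. -/
def IsJNSeq {X : Type*} [TopologicalSpace X] (μ : ℕ → (X →₀ ℝ)) : Prop :=
  (∀ n, ∑ x ∈ (μ n).support, |μ n x| = 1) ∧
  ∀ f : X → ℝ, Continuous f →
    Tendsto (fun n => ∑ x ∈ (μ n).support, μ n x * f x) atTop (nhds 0)

/-!
For `N = n + 1`, the measure `μₙ` puts mass `± 1 / (N 2ᴺ)` on an `N × 2ᴺ` grid of points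
`(xᵢ, yₛ)` taken from countable discrete subsets of `X` and `Y`, the sign at `(xᵢ, yₛ)` being
`sᵢ`: the `2ᴺ` columns realise all sign patterns on the `N` rows.

Let `f` be continuous on `X × Y`. By Glicksberg's theorem the rows `f (x, ·)` of `f` form a
totally bounded set for the sup norm, so up to `ε` they take only `K` values. Grouping the rows
accordingly, each group contributes a Rademacher sum, whose `L¹` norm over the `2ᴺ` sign
patterns is at most `2ᴺ √N` by orthogonality. Hence `|μₙ f| ≤ ε + K ‖f‖ / √N`.
-/

open Function Set BoundedContinuousFunction

namespace Pseudocompact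

section

variable {Z : Type*} [TopologicalSpace Z]

theorem of_surjective {W : Type*} [TopologicalSpace W] (hZ : Pseudocompact Z) {g : Z → W}
    (hg : Continuous g) (hs : Surjective g) : Pseudocompact W := by
  intro f hf
  obtain ⟨M, hM⟩ := hZ (f ∘ g) (hf.comp hg)
  exact ⟨M, hs.forall.2 hM⟩

variable [CompletelyRegularSpace Z]

-- Otherwise `∑ n • φₙ`, with `φₙ` a bump supported in `Uₙ`, is continuous and unbounded.
theorem not_locallyFinite (hZ : Pseudocompact Z) {U : ℕ → Set Z} (hU : ∀ n, IsOpen (U n))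
    (hne : ∀ n, (U n).Nonempty) : ¬ LocallyFinite U := by
  intro hlf
  choose a ha using hne
  choose φ hφ hφa hφU using fun n =>
    CompletelyRegularSpace.completely_regular (a n) (U n)ᶜ (hU n).isClosed_compl (not_not.2 (ha n))
  set h : ℕ → Z → ℝ := fun n z => n * (1 - φ n z)
  have hsupp : ∀ n, support (h n) ⊆ U n := fun n z hz => by
    by_contra hzU
    exact hz (by simp [h, hφU n hzU])
  have hnonneg : ∀ n z, 0 ≤ h n z := fun n z => mul_nonneg n.cast_nonneg (by simp [(φ n z).2.2])
  obtain ⟨M, hM⟩ := hZ _ (continuous_finsum (fun n => by fun_prop) (hlf.subset hsupp))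
  obtain ⟨n, hn⟩ := exists_nat_gt M
  have hle : h n (a n) ≤ ∑ᶠ m, h m (a n) :=
    single_le_finsum n ((hlf.point_finite (a n)).subset fun m hm => hsupp m hm)
      fun m => hnonneg m (a n)
  have : h n (a n) = n := by simp [h, hφa]
  linarith [le_abs_self (∑ᶠ m, h m (a n)), hM (a n)]

theorem exists_finset_forall_dist_lt (hZ : Pseudocompact Z) {E : Type*} [PseudoMetricSpace E]
    {Φ : Z → E} (hΦ : Continuous Φ) {ε : ℝ} (hε : 0 < ε) :
    ∃ T : Finset Z, ∀ z, ∃ c ∈ T, dist (Φ z) (Φ c) < ε := by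
  by_contra! hnet
  have : Std.Symm fun x y : Z => ε ≤ dist (Φ x) (Φ y) := ⟨fun x y h => by rwa [dist_comm]⟩
  obtain ⟨e, -, he⟩ := exists_seq_of_forall_finset_exists' (fun _ => True)
    (fun x y : Z => ε ≤ dist (Φ x) (Φ y)) fun T _ =>
      (hnet T).imp fun z hz => ⟨trivial, fun c hc => by rw [dist_comm]; exact hz c hc⟩
  -- the `ε / 4`-balls around an `ε`-separated sequence form a locally finite family
  refine hZ.not_locallyFinite (U := fun k => Φ ⁻¹' Metric.ball (Φ (e k)) (ε / 4))
    (fun k => Metric.isOpen_ball.preimage hΦ) (fun k => ⟨e k, by simpa using by positivity⟩)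
    fun z => ⟨_, hΦ.continuousAt.preimage_mem_nhds
      (Metric.ball_mem_nhds (Φ z) (by positivity : 0 < ε / 4)),
      Subsingleton.finite fun k ⟨u, hu, hu'⟩ l ⟨v, hv, hv'⟩ => ?_⟩
  by_contra hkl
  have := dist_triangle4 (Φ (e k)) (Φ u) (Φ v) (Φ (e l))
  have := dist_triangle (Φ u) (Φ z) (Φ v)
  simp only [mem_preimage, Metric.mem_ball] at hu hu' hv hv'
  linarith [he hkl, dist_comm (Φ u) (Φ (e k)), dist_comm (Φ v) (Φ z)]

end

variable {X Y : Type*} [TopologicalSpace X] [TopologicalSpace Y]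
  [CompletelyRegularSpace X] [CompletelyRegularSpace Y]


theorem exists_lt_abs_sub_lt (hpc : Pseudocompact (X × Y)) {g : X × Y → ℝ} (hg : Continuous g)
    {A : ℕ → Set X} {B : ℕ → Set Y} (hA : ∀ n, IsOpen (A n)) (hB : ∀ n, IsOpen (B n))
    (hAne : ∀ n, (A n).Nonempty) (hBne : ∀ n, (B n).Nonempty) {δ : ℝ} (hδ : 0 < δ) :
    ∃ n m, n < m ∧ ∃ u ∈ A n, ∃ u' ∈ A m, ∃ v ∈ B n, |g (u, v) - g (u', v)| < δ := by
  have hcluster := hpc.not_locallyFinite (fun n => (hA n).prod (hB n))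
    fun n => (hAne n).prod (hBne n)
  simp only [LocallyFinite, not_forall, not_exists, not_and, Set.not_finite] at hcluster
  obtain ⟨z, hz⟩ := hcluster
  have hnear : IsOpen {w : X × Y | |g w - g z| < δ / 2} :=
    isOpen_lt (by fun_prop) continuous_const
  obtain ⟨P, Q, hP, hQ, hzP, hzQ, hPQ⟩ :=
    isOpen_prod_iff.1 hnear z.1 z.2 (by simpa using half_pos hδ)
  have hinf := hz _ (prod_mem_nhds (hP.mem_nhds hzP) (hQ.mem_nhds hzQ))
  obtain ⟨n, ⟨⟨u, v⟩, ⟨hu, hv⟩, huP, hvQ⟩⟩ := hinf.nonempty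
  obtain ⟨m, ⟨⟨u', _⟩, ⟨hu', _⟩, hu'P, _⟩, hnm⟩ := hinf.exists_gt n
  refine ⟨n, m, hnm, u, hu, u', hu', v, hv, ?_⟩
  have h₁ : |g (u, v) - g z| < δ / 2 := hPQ ⟨huP, hvQ⟩
  have h₂ : |g (u', v) - g z| < δ / 2 := hPQ ⟨hu'P, hvQ⟩
  have := abs_sub_le (g (u, v)) (g z) (g (u', v))
  rw [abs_sub_comm (g z)] at this
  linarith

/-- Glicksberg: otherwise there are rectangles `Aₙ × Bₙ` on which `|f (x, y) - f (x₀, y)| > ε/2`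
while it is `< ε/4` on `Aₘ × Bₙ` for `n < m`, contradicting `exists_lt_abs_sub_lt`. -/
theorem tendstoUniformly_curry (hpc : Pseudocompact (X × Y)) {f : X × Y → ℝ}
    (hf : Continuous f) (x₀ : X) :
    TendstoUniformly (fun x y => f (x, y)) (fun y => f (x₀, y)) (𝓝 x₀) := by
  set g : X × Y → ℝ := fun z => f z - f (x₀, z.2)
  have hg : Continuous g := by fun_prop
  rw [Metric.tendstoUniformly_iff]
  by_contra! hfar
  obtain ⟨ε, hε, hfreq⟩ := hfar
  have hbad : ∀ N, x₀ ∈ N → IsOpen N → ∃ x ∈ N, ∃ y, ε ≤ |g (x, y)| := by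
    simpa [Real.dist_eq, abs_sub_comm, g] using frequently_nhds_iff.1 hfreq
  set P : Set X × Set Y × Set X → Prop := fun R => IsOpen R.1 ∧ R.1.Nonempty ∧ IsOpen R.2.1 ∧
    R.2.1.Nonempty ∧ IsOpen R.2.2 ∧ x₀ ∈ R.2.2 ∧ R.1 ×ˢ R.2.1 ⊆ {z | ε / 2 < |g z|} ∧
      R.2.2 ×ˢ R.2.1 ⊆ {z | |g z| < ε / 4}
  have step : ∀ N, IsOpen N → x₀ ∈ N → ∃ R, P R ∧ R.1 ⊆ N := by
    intro N hN hx₀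
    obtain ⟨x, hxN, y, hxy⟩ := hbad N hx₀ hN
    obtain ⟨u, v, hu, hv, hxu, hyv, huv⟩ := isOpen_prod_iff.1
      (isOpen_lt continuous_const hg.abs) x y (show ε / 2 < |g (x, y)| by linarith)
    obtain ⟨u', v', hu', hv', hxu', hyv', huv'⟩ := isOpen_prod_iff.1
      (isOpen_lt hg.abs continuous_const) x₀ y (show |g (x₀, y)| < ε / 4 by simp [g, hε])
    refine ⟨(u ∩ N, v ∩ v', u'), ⟨hu.inter hN, ⟨x, hxu, hxN⟩, hv.inter hv', ⟨y, hyv, hyv'⟩,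
      hu', hxu', ?_, ?_⟩, inter_subset_right⟩
    · exact (prod_mono inter_subset_left inter_subset_left).trans huv
    · exact (prod_mono subset_rfl inter_subset_right).trans huv'
  obtain ⟨R, hR, hRR⟩ := exists_seq_of_forall_finset_exists P (fun R R' => R'.1 ⊆ R.2.2)
    fun S hS => (step (⋂ R ∈ S, R.2.2) (isOpen_biInter_finset fun R hR => (hS R hR).2.2.2.2.1)
      (mem_iInter₂.2 fun R hR => (hS R hR).2.2.2.2.2.1)).imp
        fun R' hR' => ⟨hR'.1, fun R hR => hR'.2.trans (biInter_subset_of_mem hR)⟩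
  simp only [P] at hR
  choose hA hAne hB hBne _ _ hbig hsmall using hR
  obtain ⟨n, m, hnm, u, hu, u', hu', v, hv, huu'⟩ :=
    hpc.exists_lt_abs_sub_lt hg hA hB hAne hBne (by positivity : 0 < ε / 4)
  have h₁ : ε / 2 < |g (u, v)| := hbig n ⟨hu, hv⟩
  have h₂ : |g (u', v)| < ε / 4 := hsmall n ⟨hRR n m hnm hu', hv⟩
  linarith [abs_sub_abs_le_abs_sub (g (u, v)) (g (u', v))]

theorem exists_finset_forall_abs_sub_le [Nonempty Y] (hpc : Pseudocompact (X × Y))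
    {f : X × Y → ℝ} (hf : Continuous f) {ε : ℝ} (hε : 0 < ε) :
    ∃ T : Finset X, ∀ x, ∃ c ∈ T, ∀ y, |f (x, y) - f (c, y)| ≤ ε := by
  obtain ⟨M, hM⟩ := hpc f hf
  let Φ : X → Y →ᵇ ℝ := fun x =>
    .ofNormedAddCommGroup (fun y => f (x, y)) (by fun_prop) M fun y => hM (x, y)
  have hΦ : Continuous Φ := continuous_iff_continuousAt.2 fun x₀ =>
    tendsto_iff_tendstoUniformly.2 (hpc.tendstoUniformly_curry hf x₀)
  have hX : Pseudocompact X := hpc.of_surjective continuous_fst Prod.fst_surjective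
  obtain ⟨T, hT⟩ := hX.exists_finset_forall_dist_lt hΦ hε
  refine ⟨T, fun x => (hT x).imp fun c hc => ⟨hc.1, fun y => ?_⟩⟩
  exact (dist_coe_le_dist y).trans hc.2.le

end Pseudocompact

def boolSign (b : Bool) : ℝ := if b then 1 else -1

noncomputable def signGrid (ι : Type*) [Fintype ι] (p : ι × (ι → Bool)) : ℝ :=
  boolSign (p.2 p.1) / (Fintype.card ι * 2 ^ Fintype.card ι)

@[simp]
theorem abs_boolSign (b : Bool) : |boolSign b| = 1 := by
  cases b <;> simp [boolSign]

theorem boolSign_mul_self (b : Bool) : boolSign b * boolSign b = 1 := by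
  cases b <;> simp [boolSign]

theorem boolSign_not (b : Bool) : boolSign (!b) = -boolSign b := by
  cases b <;> simp [boolSign]

section Rademacher

open Finset

variable {ι : Type*} [Fintype ι] [DecidableEq ι]

theorem sum_boolSign_mul_boolSign (i j : ι) :
    ∑ s : ι → Bool, boolSign (s i) * boolSign (s j) = if i = j then 2 ^ Fintype.card ι else 0 := by
  split_ifs with hij
  · simp [hij, boolSign_mul_self]
  -- flipping the `i`-th sign is a sign-reversing involution
  refine sum_involution (fun s _ => update s i !(s i)) (fun s _ => ?_) (fun s _ _ h => ?_)
    (fun _ _ => mem_univ _) fun s _ => by simp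
  · simp [update_of_ne (Ne.symm hij), boolSign_not]
  · simpa using congrFun h i

theorem sum_sq_sum_boolSign (S : Finset ι) :
    ∑ s : ι → Bool, (∑ i ∈ S, boolSign (s i)) ^ 2 = #S * 2 ^ Fintype.card ι := by
  simp_rw [sq, sum_mul_sum]
  rw [sum_comm]
  refine (sum_congr rfl fun i _ => sum_comm).trans ?_
  simp_rw [sum_boolSign_mul_boolSign, sum_ite_eq]
  simp

theorem sum_abs_sum_boolSign_le (S : Finset ι) :
    ∑ s : ι → Bool, |∑ i ∈ S, boolSign (s i)| ≤ 2 ^ Fintype.card ι * √(#S : ℝ) := by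
  rw [← Real.sqrt_sq (by positivity : (0 : ℝ) ≤ 2 ^ Fintype.card ι),
    ← Real.sqrt_mul (by positivity), Real.le_sqrt (by positivity) (by positivity)]
  calc (∑ s : ι → Bool, |∑ i ∈ S, boolSign (s i)|) ^ 2
      ≤ Fintype.card (ι → Bool) * ∑ s : ι → Bool, |∑ i ∈ S, boolSign (s i)| ^ 2 :=
        sq_sum_le_card_mul_sum_sq
    _ = (2 ^ Fintype.card ι) ^ 2 * #S := by
        simp only [sq_abs, sum_sq_sum_boolSign, Fintype.card_fun, Fintype.card_bool]
        push_cast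
        ring

theorem abs_sum_boolSign_mul_le [Nonempty ι] {κ : Type*} [Fintype κ] (k : ι → κ)
    (C : κ → (ι → Bool) → ℝ) {M : ℝ} (hC : ∀ j s, |C j s| ≤ M) :
    |∑ p : ι × (ι → Bool), boolSign (p.2 p.1) * C (k p.1) p.2| ≤
      Fintype.card κ * M * (2 ^ Fintype.card ι * √(Fintype.card ι)) := by
  classical
  have hM : 0 ≤ M := (abs_nonneg _).trans (hC (k (Classical.arbitrary ι)) fun _ => true)
  have hfiber (s : ι → Bool) : ∑ i, boolSign (s i) * C (k i) s =
      ∑ j, (∑ i with k i = j, boolSign (s i)) * C j s := by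
    rw [← sum_fiberwise univ k]
    simp_rw [sum_mul]
    exact sum_congr rfl fun j _ => sum_congr rfl fun i hi => by rw [(mem_filter.1 hi).2]
  rw [Fintype.sum_prod_type, sum_comm]
  simp_rw [hfiber]
  rw [sum_comm]
  calc |∑ j, ∑ s : ι → Bool, (∑ i with k i = j, boolSign (s i)) * C j s|
      ≤ ∑ j, ∑ s : ι → Bool, |∑ i with k i = j, boolSign (s i)| * M :=
        (abs_sum_le_sum_abs _ _).trans <| sum_le_sum fun j _ =>
          (abs_sum_le_sum_abs _ _).trans <| sum_le_sum fun s _ => by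
            rw [abs_mul]
            exact mul_le_mul_of_nonneg_left (hC j s) (abs_nonneg _)
    _ ≤ ∑ _j : κ, 2 ^ Fintype.card ι * √(Fintype.card ι) * M := by
        refine sum_le_sum fun j _ => ?_
        rw [← sum_mul]
        refine mul_le_mul_of_nonneg_right ((sum_abs_sum_boolSign_le _).trans ?_) hM
        gcongr
        exact card_le_univ _
    _ = Fintype.card κ * M * (2 ^ Fintype.card ι * √(Fintype.card ι)) := by
        rw [sum_const, card_univ, nsmul_eq_mul]
        ring

theorem sum_abs_signGrid [Nonempty ι] : ∑ p, |signGrid ι p| = 1 := by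
  have : (Fintype.card ι : ℝ) ≠ 0 := by simp
  simp [signGrid, abs_div]
  field_simp

theorem abs_sum_signGrid_mul_le [Nonempty ι] {κ : Type*} [Fintype κ] (F : ι × (ι → Bool) → ℝ)
    (k : ι → κ) (C : κ → (ι → Bool) → ℝ) {ε M : ℝ} (hFC : ∀ i s, |F (i, s) - C (k i) s| ≤ ε)
    (hC : ∀ j s, |C j s| ≤ M) :
    |∑ p, signGrid ι p * F p| ≤ ε + Fintype.card κ * M / √(Fintype.card ι) := by
  set N := Fintype.card ι
  have hN : 0 < (N : ℝ) := by simp [N, Fintype.card_pos]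
  have hsplit : ∑ p, signGrid ι p * F p =
      (∑ p : ι × (ι → Bool), boolSign (p.2 p.1) * (F p - C (k p.1) p.2) +
        ∑ p : ι × (ι → Bool), boolSign (p.2 p.1) * C (k p.1) p.2) / (N * 2 ^ N) := by
    rw [← sum_add_distrib, sum_div]
    refine sum_congr rfl fun p _ => ?_
    simp only [signGrid]
    ring
  have herr : |∑ p : ι × (ι → Bool), boolSign (p.2 p.1) * (F p - C (k p.1) p.2)| ≤
      N * 2 ^ N * ε := by
    calc _ ≤ ∑ _p : ι × (ι → Bool), ε := (abs_sum_le_sum_abs _ _).trans <| sum_le_sum fun p _ => by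
          rw [abs_mul, abs_boolSign, one_mul]
          exact hFC p.1 p.2
      _ = N * 2 ^ N * ε := by simp [N]
  have hc : 0 < (N : ℝ) * 2 ^ N := mul_pos hN (by positivity)
  rw [hsplit, abs_div, abs_of_pos hc, div_le_iff₀ hc]
  calc _ ≤ _ := abs_add_le _ _
    _ ≤ N * 2 ^ N * ε + Fintype.card κ * M * (2 ^ N * √N) :=
        add_le_add herr (abs_sum_boolSign_mul_le k C hC)
    _ = (ε + Fintype.card κ * M / √N) * (N * 2 ^ N) := by
        field_simp
        linear_combination (Fintype.card κ * M) * Real.mul_self_sqrt hN.le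

end Rademacher

section GridMeasure

variable {X Y ι : Type*} [Fintype ι]

noncomputable def gridMeasure (a : ι ↪ X) (b : (ι → Bool) ↪ Y) : X × Y →₀ ℝ :=
  Finsupp.embDomain (a.prodMap b) (Finsupp.equivFunOnFinite.symm (signGrid ι))

theorem sum_support_gridMeasure [DecidableEq ι] (a : ι ↪ X) (b : (ι → Bool) ↪ Y)
    (g : X × Y → ℝ → ℝ) (hg : ∀ z, g z 0 = 0) :
    ∑ z ∈ (gridMeasure a b).support, g z (gridMeasure a b z) =
      ∑ p, g (a p.1, b p.2) (signGrid ι p) := by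
  change (gridMeasure a b).sum g = _
  rw [gridMeasure, Finsupp.sum_embDomain, Finsupp.sum_fintype _ _ fun _ => hg _]
  simp [Prod.map]

theorem support_gridMeasure_subset (a : ι ↪ X) (b : (ι → Bool) ↪ Y) :
    ↑(gridMeasure a b).support ⊆ range a ×ˢ range b := by
  rw [gridMeasure, Finsupp.support_embDomain, Finset.coe_map]
  rintro _ ⟨p, -, rfl⟩
  exact ⟨mem_range_self _, mem_range_self _⟩

end GridMeasure

theorem isJNSeq_gridMeasure {X Y : Type*} [TopologicalSpace X] [TopologicalSpace Y]
    [CompletelyRegularSpace X] [CompletelyRegularSpace Y] [Nonempty Y]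
    (hpc : Pseudocompact (X × Y)) (a : ∀ n, Fin (n + 1) ↪ X)
    (b : ∀ n, (Fin (n + 1) → Bool) ↪ Y) :
    IsJNSeq fun n => gridMeasure (a n) (b n) := by
  refine ⟨fun n => ?_, fun f hf => ?_⟩
  · rw [sum_support_gridMeasure _ _ (fun _ c => |c|) fun _ => abs_zero]
    exact sum_abs_signGrid
  obtain ⟨M, hM⟩ := hpc f hf
  rw [Metric.tendsto_nhds]
  intro ε hε
  obtain ⟨T, hT⟩ := hpc.exists_finset_forall_abs_sub_le hf (half_pos hε)
  choose c hcT hc using hT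
  have hlim : Tendsto (fun n : ℕ => T.card * M / √((n : ℝ) + 1)) atTop (𝓝 0) :=
    tendsto_const_nhds.div_atTop <| Real.tendsto_sqrt_atTop.comp <|
      tendsto_atTop_add_const_right _ 1 tendsto_natCast_atTop_atTop
  filter_upwards [hlim.eventually (gt_mem_nhds (half_pos hε))] with n hn
  rw [Real.dist_eq, sub_zero, sum_support_gridMeasure _ _ (fun z c => c * f z) fun _ => zero_mul _]
  have := abs_sum_signGrid_mul_le (fun p => f (a n p.1, b n p.2))
    (fun i => (⟨c (a n i), hcT _⟩ : T)) (fun t s => f (t, b n s)) (fun i s => hc _ _)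
    fun t s => hM _
  simp only [Fintype.card_coe, Fintype.card_fin, Nat.cast_add, Nat.cast_one] at this
  linarith

theorem exists_injective_discreteTopology_range (X : Type*) [TopologicalSpace X] [T2Space X]
    [Infinite X] (α : Type*) [Countable α] :
    ∃ a : α → X, Injective a ∧ DiscreteTopology (range a) := by
  obtain ⟨f, hf⟩ := exists_topology_isEmbedding_nat X
  obtain ⟨c, hc⟩ := exists_injective_nat α
  have : DiscreteTopology (range f) := hf.toHomeomorph.symm.isEmbedding.discreteTopology
  exact ⟨f ∘ c, hf.injective.comp hc, .of_subset this (range_comp_subset_range c f)⟩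

theorem Function.Injective.disjoint_range_sigmaMk {κ β : Type*} {α : κ → Type*}
    {a : (Σ k, α k) → β} (ha : Injective a) {k l : κ} (hkl : k ≠ l) :
    Disjoint (range fun x : α k => a ⟨k, x⟩) (range fun x : α l => a ⟨l, x⟩) := by
  refine disjoint_left.2 ?_
  rintro _ ⟨x, rfl⟩ ⟨y, hy⟩
  exact hkl (congrArg Sigma.fst (ha hy)).symm

theorem stmt2 (X Y : Type*) [TopologicalSpace X] [TopologicalSpace Y]
    [CompletelyRegularSpace X] [T2Space X] [CompletelyRegularSpace Y] [T2Space Y]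
    [Infinite X] [Infinite Y]
    (hpc : Pseudocompact (X × Y)) :
    ∃ μ : ℕ → ((X × Y) →₀ ℝ), IsJNSeq μ ∧
      ∃ (D : Set X) (E : Set Y), D.Countable ∧ E.Countable ∧
        DiscreteTopology ↥D ∧ DiscreteTopology ↥E ∧
        (∀ n, (↑(μ n).support : Set (X × Y)) ⊆ D ×ˢ E) ∧
        (∀ m n, m ≠ n →
          Disjoint (Prod.fst '' (↑(μ m).support : Set (X × Y)))
            (Prod.fst '' (↑(μ n).support : Set (X × Y)))) ∧
        (∀ m n, m ≠ n →
          Disjoint (Prod.snd '' (↑(μ m).support : Set (X × Y)))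
            (Prod.snd '' (↑(μ n).support : Set (X × Y)))) := by
  obtain ⟨a, ha, hDa⟩ := exists_injective_discreteTopology_range X (Σ n : ℕ, Fin (n + 1))
  obtain ⟨b, hb, hDb⟩ :=
    exists_injective_discreteTopology_range Y (Σ n : ℕ, Fin (n + 1) → Bool)
  let aₙ n : Fin (n + 1) ↪ X := ⟨fun i => a ⟨n, i⟩, ha.comp sigma_mk_injective⟩
  let bₙ n : (Fin (n + 1) → Bool) ↪ Y := ⟨fun s => b ⟨n, s⟩, hb.comp sigma_mk_injective⟩
  have hsupp n : ↑(gridMeasure (aₙ n) (bₙ n)).support ⊆ range (aₙ n) ×ˢ range (bₙ n) :=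
    support_gridMeasure_subset _ _
  refine ⟨fun n => gridMeasure (aₙ n) (bₙ n), isJNSeq_gridMeasure hpc aₙ bₙ, range a, range b,
    countable_range a, countable_range b, hDa, hDb, fun n => (hsupp n).trans ?_,
    fun m n hmn => ?_, fun m n hmn => ?_⟩
  · exact prod_mono (range_comp_subset_range (Sigma.mk n) a)
      (range_comp_subset_range (Sigma.mk n) b)
  · exact (ha.disjoint_range_sigmaMk hmn).mono
      ((image_mono (hsupp m)).trans (fst_image_prod_subset _ _))
      ((image_mono (hsupp n)).trans (fst_image_prod_subset _ _))
  · exact (hb.disjoint_range_sigmaMk hmn).mono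
      ((image_mono (hsupp m)).trans (snd_image_prod_subset _ _))
      ((image_mono (hsupp n)).trans (snd_image_prod_subset _ _))
end

section
/- The product βℕ × βℕ admits a JN-sequence (μ_n) such that supp(μ_n) ⊆ ℕ × ℕ for every n, the projections of the supports supp(μ_n), n ∈ ℕ, onto the first factor are pairwise disjoint, and the projections of the supports onto the second factor are pairwise disjoint. -/
open Filter Topology

/-!
Let `H_n(u, v) = (-1)^⟨u, v⟩` be the Walsh–Hadamard matrix indexed by `u, v ∈ {0,1}^n`, and let
`μ_n` put the mass `4⁻ⁿ H_n(u, v)` at the point `(u, v)` of a `2ⁿ × 2ⁿ` grid in `ℕ × ℕ`, with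
rows and columns not used by any other `μ_m`. The rows of `H_n` are orthogonal of squared length
`2ⁿ`, so `(∑ H_n(u, v) a_u b_v)² ≤ 2ⁿ ‖a‖₂² ‖b‖₂²`; for a product function `g(x) h(y)` this gives
`μ_n(g ⊗ h)² ≤ 16⁻ⁿ · 2ⁿ · 2ⁿ ‖g‖² · 2ⁿ ‖h‖² = 2⁻ⁿ ‖g‖² ‖h‖²`. By Stone–Weierstrass the linear
span of product functions is dense in `C(βℕ × βℕ)`, and since every `μ_n` has norm one,
`μ_n(f) → 0` for all continuous `f`.
-/

section Walsh

variable {n : ℕ}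

def walsh (u v : Fin n → Bool) : ℝ := ∏ k, if u k && v k then -1 else 1

lemma abs_walsh (u v : Fin n → Bool) : |walsh u v| = 1 := by
  simp only [walsh, Finset.abs_prod]
  exact Finset.prod_eq_one fun k _ => by split_ifs <;> simp

lemma sum_walsh_mul_walsh (v v' : Fin n → Bool) :
    ∑ u, walsh u v * walsh u v' = if v = v' then 2 ^ n else 0 := by
  let s : Bool → Bool → ℝ := fun b c => if b && c then -1 else 1
  have hcoord : ∀ k, ∑ b, s b (v k) * s b (v' k) = if v k = v' k then 2 else 0 := by
    intro k
    cases v k <;> cases v' k <;> norm_num [s]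
  calc ∑ u, walsh u v * walsh u v' = ∏ k, ∑ b, s b (v k) * s b (v' k) := by
        rw [Fintype.prod_sum]
        simp only [walsh, ← Finset.prod_mul_distrib, s]
    _ = if v = v' then 2 ^ n else 0 := by
        simp only [hcoord]
        split_ifs with h
        · simp [h]
        · obtain ⟨k, hk⟩ := Function.ne_iff.mp h
          exact Finset.prod_eq_zero (Finset.mem_univ k) (if_neg hk)

lemma sum_sq_sum_walsh_mul (b : (Fin n → Bool) → ℝ) :
    ∑ u, (∑ v, walsh u v * b v) ^ 2 = 2 ^ n * ∑ v, b v ^ 2 := by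
  calc ∑ u, (∑ v, walsh u v * b v) ^ 2
      = ∑ u, ∑ v, ∑ v', walsh u v * walsh u v' * (b v * b v') := by
        simp only [sq, Finset.sum_mul_sum]
        exact Finset.sum_congr rfl fun u _ => Finset.sum_congr rfl fun v _ =>
          Finset.sum_congr rfl fun v' _ => by ring
    _ = ∑ v, ∑ v', (∑ u, walsh u v * walsh u v') * (b v * b v') := by
        rw [Finset.sum_comm]
        refine Finset.sum_congr rfl fun v _ => ?_
        rw [Finset.sum_comm]
        simp only [Finset.sum_mul]
    _ = 2 ^ n * ∑ v, b v ^ 2 := by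
        simp [sum_walsh_mul_walsh, ite_mul, Finset.mul_sum, sq]

lemma sq_sum_sum_walsh_mul_le (a b : (Fin n → Bool) → ℝ) :
    (∑ u, ∑ v, walsh u v * a u * b v) ^ 2 ≤ 2 ^ n * (∑ u, a u ^ 2) * ∑ v, b v ^ 2 := by
  have hrow : ∀ u, ∑ v, walsh u v * a u * b v = a u * ∑ v, walsh u v * b v := fun u => by
    rw [Finset.mul_sum]
    exact Finset.sum_congr rfl fun v _ => by ring
  calc (∑ u, ∑ v, walsh u v * a u * b v) ^ 2
      = (∑ u, a u * ∑ v, walsh u v * b v) ^ 2 := by simp only [hrow]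
    _ ≤ (∑ u, a u ^ 2) * ∑ u, (∑ v, walsh u v * b v) ^ 2 :=
        Finset.sum_mul_sq_le_sq_mul_sq _ _ _
    _ = 2 ^ n * (∑ u, a u ^ 2) * ∑ v, b v ^ 2 := by
        rw [sum_sq_sum_walsh_mul]; ring

lemma sum_sq_le_two_pow_mul_sq {f : (Fin n → Bool) → ℝ} {C : ℝ} (hf : ∀ u, |f u| ≤ C) :
    ∑ u, f u ^ 2 ≤ 2 ^ n * C ^ 2 := by
  refine (Finset.sum_le_card_nsmul _ _ (C ^ 2) fun u _ => ?_).trans (by simp)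
  exact sq_abs (f u) ▸ pow_le_pow_left₀ (abs_nonneg _) (hf u) 2

end Walsh

lemma ContinuousLinearMap.tendsto_zero_of_dense_span {ι 𝕜 E F : Type*} [NontriviallyNormedField 𝕜]
    [SeminormedAddCommGroup E] [NormedSpace 𝕜 E] [SeminormedAddCommGroup F] [NormedSpace 𝕜 F]
    {l : Filter ι} {T : ι → E →L[𝕜] F} {C : ℝ} (hT : ∀ i, ‖T i‖ ≤ C) {s : Set E}
    (hs : Dense (Submodule.span 𝕜 s : Set E)) (h : ∀ x ∈ s, Tendsto (fun i => T i x) l (𝓝 0))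
    (x : E) : Tendsto (fun i => T i x) l (𝓝 0) := by
  let V : Submodule 𝕜 E :=
    { carrier := {x | Tendsto (fun i => T i x) l (𝓝 0)}
      zero_mem' := by simpa using tendsto_const_nhds
      add_mem' := fun ha hb => by simpa using ha.add hb
      smul_mem' := fun c _ hx => by simpa using hx.const_smul c }
  have hequi : Equicontinuous (DFunLike.coe ∘ T) :=
    ((NormedSpace.equicontinuous_TFAE T).out 5 1).mp (⟨C, hT⟩ : ∃ C, ∀ i, ‖T i‖ ≤ C)
  have hV : IsClosed (V : Set E) := hequi.isClosed_setOfPred_tendsto (f := 0) continuous_const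
  have hspan : (Submodule.span 𝕜 s : Set E) ⊆ V := Submodule.span_le.mpr h
  exact closure_minimal hspan hV (hs.closure_eq ▸ Set.mem_univ x)

section Products

variable (X Y : Type*) [TopologicalSpace X] [TopologicalSpace Y]

def ContinuousMap.productFunctions : Submonoid C(X × Y, ℝ) where
  carrier := {F | ∃ (g : C(X, ℝ)) (h : C(Y, ℝ)), ∀ z, F z = g z.1 * h z.2}
  one_mem' := ⟨1, 1, fun _ => by simp⟩
  mul_mem' := by
    rintro _ _ ⟨g, h, hF⟩ ⟨g', h', hF'⟩
    exact ⟨g * g', h * h', fun z => by simp only [ContinuousMap.mul_apply, hF, hF']; ring⟩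

variable {X Y}

lemma ContinuousMap.separatesPoints_adjoin_productFunctions [T35Space X] [T35Space Y] :
    (Algebra.adjoin ℝ (productFunctions X Y : Set C(X × Y, ℝ))).SeparatesPoints := by
  intro z z' hzz'
  have mem : ∀ (g : C(X, ℝ)) (h : C(Y, ℝ)), (g.comp fst * h.comp snd : C(X × Y, ℝ)) ∈
      Algebra.adjoin ℝ (productFunctions X Y : Set C(X × Y, ℝ)) :=
    fun g h => Algebra.subset_adjoin ⟨g, h, fun _ => rfl⟩
  rcases not_and_or.mp (Prod.ext_iff.not.mp hzz') with hx | hy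
  · obtain ⟨g, hg, hgz⟩ := separatesPoints_continuous_of_t35Space hx
    exact ⟨_, ⟨_, mem ⟨g, hg⟩ 1, rfl⟩, by simpa using hgz⟩
  · obtain ⟨h, hh, hhz⟩ := separatesPoints_continuous_of_t35Space hy
    exact ⟨_, ⟨_, mem 1 ⟨h, hh⟩, rfl⟩, by simpa using hhz⟩

lemma ContinuousMap.dense_span_productFunctions [CompactSpace X] [CompactSpace Y]
    [T35Space X] [T35Space Y] :
    Dense (Submodule.span ℝ (productFunctions X Y : Set C(X × Y, ℝ)) : Set C(X × Y, ℝ)) := by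
  have hSW := subalgebra_topologicalClosure_eq_top_of_separatesPoints _
    (separatesPoints_adjoin_productFunctions (X := X) (Y := Y))
  rw [← Submonoid.closure_eq (productFunctions X Y), ← Algebra.adjoin_eq_span,
    dense_iff_closure_eq, Subalgebra.coe_toSubmodule, ← Subalgebra.topologicalClosure_coe,
    hSW, Algebra.coe_top]

end Products

noncomputable def Finsupp.integralCLM {Z : Type*} [TopologicalSpace Z] (μ : Z →₀ ℝ) :
    C(Z, ℝ) →L[ℝ] ℝ :=
  μ.sum fun z c => c • ContinuousMap.evalCLM ℝ z

lemma Finsupp.integralCLM_apply {Z : Type*} [TopologicalSpace Z] (μ : Z →₀ ℝ) (f : C(Z, ℝ)) :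
    μ.integralCLM f = μ.sum fun z c => c * f z := by
  simp [integralCLM, Finsupp.sum]

lemma Finsupp.norm_integralCLM_le {Z : Type*} [TopologicalSpace Z] [CompactSpace Z]
    (μ : Z →₀ ℝ) : ‖μ.integralCLM‖ ≤ μ.sum fun _ c => |c| := by
  refine ContinuousLinearMap.opNorm_le_bound _ (Finset.sum_nonneg fun _ _ => abs_nonneg _)
    fun f => ?_
  rw [integralCLM_apply, Real.norm_eq_abs, Finsupp.sum, Finsupp.sum, Finset.sum_mul]
  refine (Finset.abs_sum_le_sum_abs _ _).trans (Finset.sum_le_sum fun z _ => ?_)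
  rw [abs_mul]
  exact mul_le_mul_of_nonneg_left (f.norm_coe_le_norm z) (abs_nonneg _)

lemma isJNSeq_of_tendsto_product {X Y : Type*} [TopologicalSpace X] [TopologicalSpace Y]
    [CompactSpace X] [CompactSpace Y] [T35Space X] [T35Space Y] {μ : ℕ → (X × Y →₀ ℝ)}
    (hnorm : ∀ n, (μ n).sum (fun _ c => |c|) = 1)
    (hprod : ∀ (g : C(X, ℝ)) (h : C(Y, ℝ)),
      Tendsto (fun n => (μ n).sum fun z c => c * (g z.1 * h z.2)) atTop (𝓝 0)) :
    IsJNSeq μ := by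
  refine ⟨hnorm, fun f hf => ?_⟩
  have hbound : ∀ n, ‖(μ n).integralCLM‖ ≤ 1 := fun n =>
    (Finsupp.norm_integralCLM_le _).trans (hnorm n).le
  have hmem : ∀ F ∈ (ContinuousMap.productFunctions X Y : Set C(X × Y, ℝ)),
      Tendsto (fun n => (μ n).integralCLM F) atTop (𝓝 0) := by
    rintro F ⟨g, h, hF⟩
    simpa only [Finsupp.integralCLM_apply, hF] using hprod g h
  exact (ContinuousLinearMap.tendsto_zero_of_dense_span hbound
    ContinuousMap.dense_span_productFunctions hmem ⟨f, hf⟩).congr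
    fun n => (μ n).integralCLM_apply ⟨f, hf⟩

def cubeCode (n : ℕ) : (Fin n → Bool) ↪ ℕ :=
  ⟨fun u => Nat.pair n (Encodable.encode u),
    fun _ _ h => Encodable.encode_injective (Nat.pair_eq_pair.mp h).2⟩

lemma eq_of_cubeCode_eq {m n : ℕ} {u : Fin m → Bool} {v : Fin n → Bool}
    (h : cubeCode m u = cubeCode n v) : m = n :=
  (Nat.pair_eq_pair.mp h).1

section WalshMeasure

variable {X Y : Type*} (a : ℕ ↪ X) (b : ℕ ↪ Y)

noncomputable def walshMeasure (n : ℕ) : X × Y →₀ ℝ :=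
  Finsupp.embDomain (((cubeCode n).trans a).prodMap ((cubeCode n).trans b))
    (Finsupp.equivFunOnFinite.symm fun p => walsh p.1 p.2 / 4 ^ n)

lemma walshMeasure_sum {N : Type*} [AddCommMonoid N] (n : ℕ) (g : X × Y → ℝ → N)
    (hg : ∀ z, g z 0 = 0) :
    (walshMeasure a b n).sum g =
      ∑ u, ∑ v, g (a (cubeCode n u), b (cubeCode n v)) (walsh u v / 4 ^ n) := by
  rw [walshMeasure, Finsupp.sum_embDomain, Finsupp.sum_fintype _ _ fun _ => hg _,
    Fintype.sum_prod_type]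
  rfl

lemma walshMeasure_sum_abs (n : ℕ) : (walshMeasure a b n).sum (fun _ c => |c|) = 1 := by
  rw [walshMeasure_sum a b n _ fun _ => abs_zero]
  have h4 : (4 : ℝ) ^ n = 2 ^ n * 2 ^ n := by rw [← mul_pow]; norm_num
  simp [abs_div, abs_walsh, h4]

lemma exists_eq_of_mem_support_walshMeasure {n : ℕ} {z : X × Y}
    (hz : z ∈ (walshMeasure a b n).support) :
    ∃ u v, z = (a (cubeCode n u), b (cubeCode n v)) := by
  rw [walshMeasure, Finsupp.support_embDomain, Finset.mem_map] at hz
  obtain ⟨p, -, rfl⟩ := hz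
  exact ⟨p.1, p.2, rfl⟩

lemma disjoint_image_fst_support_walshMeasure {m n : ℕ} (hmn : m ≠ n) :
    Disjoint (Prod.fst '' ((walshMeasure a b m).support : Set (X × Y)))
      (Prod.fst '' ((walshMeasure a b n).support : Set (X × Y))) := by
  rw [Set.disjoint_left]
  rintro _ ⟨z, hz, rfl⟩ ⟨z', hz', hzz'⟩
  obtain ⟨u, _, rfl⟩ := exists_eq_of_mem_support_walshMeasure a b hz
  obtain ⟨u', _, rfl⟩ := exists_eq_of_mem_support_walshMeasure a b hz'
  exact hmn (eq_of_cubeCode_eq (a.injective hzz')).symm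

lemma disjoint_image_snd_support_walshMeasure {m n : ℕ} (hmn : m ≠ n) :
    Disjoint (Prod.snd '' ((walshMeasure a b m).support : Set (X × Y)))
      (Prod.snd '' ((walshMeasure a b n).support : Set (X × Y))) := by
  rw [Set.disjoint_left]
  rintro _ ⟨z, hz, rfl⟩ ⟨z', hz', hzz'⟩
  obtain ⟨_, v, rfl⟩ := exists_eq_of_mem_support_walshMeasure a b hz
  obtain ⟨_, v', rfl⟩ := exists_eq_of_mem_support_walshMeasure a b hz'
  exact hmn (eq_of_cubeCode_eq (b.injective hzz')).symm

lemma sq_walshMeasure_sum_mul_le (n : ℕ) (g : X → ℝ) (h : Y → ℝ) {Cg Ch : ℝ}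
    (hg : ∀ x, |g x| ≤ Cg) (hh : ∀ y, |h y| ≤ Ch) :
    ((walshMeasure a b n).sum fun z c => c * (g z.1 * h z.2)) ^ 2 ≤
      (Cg * Ch) ^ 2 * (1 / 2) ^ n := by
  rw [walshMeasure_sum a b n (fun z c => c * (g z.1 * h z.2)) fun _ => zero_mul _]
  set G : (Fin n → Bool) → ℝ := fun u => g (a (cubeCode n u))
  set H : (Fin n → Bool) → ℝ := fun v => h (b (cubeCode n v))
  calc (∑ u, ∑ v, walsh u v / 4 ^ n * (G u * H v)) ^ 2
      = (∑ u, ∑ v, walsh u v * G u * H v) ^ 2 / (4 ^ n) ^ 2 := by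
        simp only [← div_pow, Finset.sum_div]
        congr 1
        exact Finset.sum_congr rfl fun u _ => Finset.sum_congr rfl fun v _ => by ring
    _ ≤ 2 ^ n * (∑ u, G u ^ 2) * (∑ v, H v ^ 2) / (4 ^ n) ^ 2 := by
        gcongr
        exact sq_sum_sum_walsh_mul_le G H
    _ ≤ 2 ^ n * (2 ^ n * Cg ^ 2) * (2 ^ n * Ch ^ 2) / (4 ^ n) ^ 2 := by
        gcongr
        · exact sum_sq_le_two_pow_mul_sq fun u => hg _
        · exact sum_sq_le_two_pow_mul_sq fun v => hh _
    _ = (Cg * Ch) ^ 2 * (1 / 2) ^ n := by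
        rw [show (4 : ℝ) = 2 * 2 by norm_num, mul_pow, one_div_pow]
        field_simp

variable [TopologicalSpace X] [TopologicalSpace Y]

lemma tendsto_walshMeasure_sum_mul [CompactSpace X] [CompactSpace Y] (g : C(X, ℝ)) (h : C(Y, ℝ)) :
    Tendsto (fun n => (walshMeasure a b n).sum fun z c => c * (g z.1 * h z.2)) atTop (𝓝 0) := by
  have hbound := fun n => Real.abs_le_sqrt
    (sq_walshMeasure_sum_mul_le a b n g h g.norm_coe_le_norm h.norm_coe_le_norm)
  have hlim : Tendsto (fun n : ℕ => √((‖g‖ * ‖h‖) ^ 2 * (1 / 2) ^ n)) atTop (𝓝 0) := by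
    simpa using ((tendsto_pow_atTop_nhds_zero_of_lt_one (by norm_num) (by norm_num :
      (1 / 2 : ℝ) < 1)).const_mul ((‖g‖ * ‖h‖) ^ 2)).sqrt
  exact squeeze_zero_norm hbound hlim

theorem isJNSeq_walshMeasure [CompactSpace X] [CompactSpace Y] [T35Space X] [T35Space Y] :
    IsJNSeq (walshMeasure a b) :=
  isJNSeq_of_tendsto_product (walshMeasure_sum_abs a b) (tendsto_walshMeasure_sum_mul a b)

end WalshMeasure

/-- `βℕ × βℕ` (where `βℕ` is realized as the space `Ultrafilter ℕ` of ultrafilters on `ℕ`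
with its usual compact topology, and `ℕ` is identified with the principal ultrafilters via
`pure`) admits a JN-sequence supported on `ℕ × ℕ` whose supports have pairwise disjoint
projections onto each axis. -/
theorem stmt3 :
    ∃ μ : ℕ → ((Ultrafilter ℕ × Ultrafilter ℕ) →₀ ℝ), IsJNSeq μ ∧
      (∀ n, (↑(μ n).support : Set (Ultrafilter ℕ × Ultrafilter ℕ)) ⊆
        (Set.range (pure : ℕ → Ultrafilter ℕ)) ×ˢ (Set.range (pure : ℕ → Ultrafilter ℕ))) ∧
      (∀ m n, m ≠ n →
        Disjoint (Prod.fst '' (↑(μ m).support : Set (Ultrafilter ℕ × Ultrafilter ℕ)))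
          (Prod.fst '' (↑(μ n).support : Set (Ultrafilter ℕ × Ultrafilter ℕ)))) ∧
      (∀ m n, m ≠ n →
        Disjoint (Prod.snd '' (↑(μ m).support : Set (Ultrafilter ℕ × Ultrafilter ℕ)))
          (Prod.snd '' (↑(μ n).support : Set (Ultrafilter ℕ × Ultrafilter ℕ)))) := by
  let ι : ℕ ↪ Ultrafilter ℕ := ⟨pure, Ultrafilter.pure_injective⟩
  refine ⟨walshMeasure ι ι, isJNSeq_walshMeasure ι ι, fun n z hz => ?_,
    fun _ _ => disjoint_image_fst_support_walshMeasure ι ι,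
    fun _ _ => disjoint_image_snd_support_walshMeasure ι ι⟩
  obtain ⟨u, v, rfl⟩ := exists_eq_of_mem_support_walshMeasure ι ι hz
  exact ⟨⟨_, rfl⟩, ⟨_, rfl⟩⟩
end

section
/- For a Tychonoff space X the following are equivalent: (1) C_k(X) is the union of a countable family of von Neumann bounded subsets; (2) C_p(X) is the union of a countable family of von Neumann bounded subsets; (3) X is pseudocompact. -/
/-!
Bounded sets of `C_p(X)` are pointwise bounded, so if `C_p(X) = ⋃ Bₙ` then for any points `xₙ`
there are bounds `Mₙ` with `|g xₙ| ≤ Mₙ` for every `g ∈ Bₙ`. If `X` is not pseudocompact, an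
unbounded `|f|` gives points `xₙ` whose values `|f xₙ|` are `1`-separated, hence form a closed
discrete subset of `ℝ`; by Tietze some `φ : ℝ → ℝ` has `φ |f xₙ| > Mₙ` for all `n`, and `φ ∘ |f|`
lies in no `Bₙ`. Conversely, for pseudocompact `X` the space `C_k(X)` is the image of the normed
space `X →ᵇ ℝ` under a continuous linear map, hence the union of the images of the balls of
radius `n`, and `C_k(X) → C_p(X)` is a continuous linear bijection.
-/

open Filter Topology Pointwise

/-- A subset `B` of a real topological vector space is (von Neumann) bounded if for every
neighbourhood `U` of `0` there is `l > 0` with `l • B ⊆ U`. -/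
def VNBounded {E : Type*} [AddCommMonoid E] [SMul ℝ E] [TopologicalSpace E]
    (B : Set E) : Prop :=
  ∀ U ∈ nhds (0 : E), ∃ l : ℝ, 0 < l ∧ l • B ⊆ U

def IsSigmaVNBounded (E : Type*) [AddCommMonoid E] [SMul ℝ E] [TopologicalSpace E] : Prop :=
  ∃ B : ℕ → Set E, (∀ n, VNBounded (B n)) ∧ (⋃ n, B n) = Set.univ

open scoped BoundedContinuousFunction

section VNBounded

variable {E F : Type*} [AddCommGroup E] [Module ℝ E] [TopologicalSpace E]
  [AddCommGroup F] [Module ℝ F] [TopologicalSpace F]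

theorem VNBounded.of_isVonNBounded {B : Set E} (hB : Bornology.IsVonNBounded ℝ B) :
    VNBounded B := by
  intro U hU
  have hmaps := ((hB hU).eventually_nhdsNE_zero.filter_mono (nhdsGT_le_nhdsNE 0)).and
    self_mem_nhdsWithin
  obtain ⟨l, hlU, hl⟩ := hmaps.exists
  exact ⟨l, hl, (Set.image_smul (a := l) (t := B)) ▸ hlU.image_subset⟩

theorem VNBounded.image {B : Set E} (hB : VNBounded B) (T : E →L[ℝ] F) : VNBounded (T '' B) := by
  intro U hU
  obtain ⟨l, hl, hlB⟩ := hB _ (T.continuous.tendsto' 0 0 (map_zero T) hU)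
  exact ⟨l, hl, image_smul_set T l B ▸ Set.image_subset_iff.2 hlB⟩

theorem VNBounded.exists_abs_le {B : Set E} (hB : VNBounded B) (φ : E →L[ℝ] ℝ) :
    ∃ M, ∀ b ∈ B, |φ b| ≤ M := by
  obtain ⟨l, hl, hlB⟩ := hB.image φ _ (Metric.ball_mem_nhds 0 one_pos)
  refine ⟨l⁻¹, fun b hb => ?_⟩
  have hlb : |l * φ b| < 1 := by
    simpa using hlB (Set.smul_mem_smul_set (Set.mem_image_of_mem φ hb))
  rw [abs_mul, abs_of_pos hl] at hlb
  rw [← mul_one l⁻¹, le_inv_mul_iff₀ hl]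
  exact hlb.le

theorem IsSigmaVNBounded.of_surjective (hE : IsSigmaVNBounded E) (T : E →L[ℝ] F)
    (hT : Function.Surjective T) : IsSigmaVNBounded F := by
  obtain ⟨B, hB, hcov⟩ := hE
  refine ⟨fun n => T '' B n, fun n => (hB n).image T, ?_⟩
  rw [← Set.image_iUnion, hcov, Set.image_univ, hT.range_eq]

end VNBounded

theorem isSigmaVNBounded_of_normedSpace (E : Type*) [NormedAddCommGroup E] [NormedSpace ℝ E] :
    IsSigmaVNBounded E :=
  ⟨fun n => Metric.closedBall 0 n,
    fun n => .of_isVonNBounded (NormedSpace.isVonNBounded_closedBall ℝ E n),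
    Set.eq_univ_of_forall fun x =>
      Set.mem_iUnion.2 ⟨⌈‖x‖⌉₊, mem_closedBall_zero_iff.2 (Nat.le_ceil _)⟩⟩

theorem exists_seq_add_one_le {α : Type*} {u : α → ℝ} (hu : ∀ r, ∃ a, r < u a) :
    ∃ x : ℕ → α, ∀ n, u (x n) + 1 ≤ u (x (n + 1)) := by
  choose next hnext using hu
  exact ⟨fun n => Nat.rec (next 0) (fun _ a => next (u a + 1)) n, fun n => (hnext _).le⟩

theorem isClosedEmbedding_of_add_one_le {t : ℕ → ℝ} (ht : ∀ n, t n + 1 ≤ t (n + 1)) :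
    IsClosedEmbedding t := by
  have hmono : Monotone fun n : ℕ => t n - n :=
    monotone_nat_of_le_succ fun n => by push_cast; linarith [ht n]
  refine Metric.isClosedEmbedding_of_pairwise_le_dist one_pos fun m n hmn => ?_
  wlog h : m < n generalizing m n
  · rw [dist_comm]
    exact this n m hmn.symm (hmn.lt_or_gt.resolve_left h)
  have hmn' : (m : ℝ) + 1 ≤ n := by exact_mod_cast h
  have htmn : t m - m ≤ t n - n := hmono h.le
  rw [Real.dist_eq, abs_sub_comm, abs_of_nonneg] <;> linarith

section Pseudocompact

variable {X : Type*} [TopologicalSpace X]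

theorem exists_seq_forall_exists_lt_of_not_pseudocompact (hX : ¬ Pseudocompact X) :
    ∃ x : ℕ → X, ∀ c : ℕ → ℝ, ∃ g : C(X, ℝ), ∀ n, c n < g (x n) := by
  simp only [Pseudocompact, not_forall, not_exists, not_le] at hX
  obtain ⟨f, hf, hunbdd⟩ := hX
  obtain ⟨x, hx⟩ := exists_seq_add_one_le hunbdd
  refine ⟨x, fun c => ?_⟩
  obtain ⟨φ, hφ⟩ := ContinuousMap.exists_extension' (isClosedEmbedding_of_add_one_le hx)
    ⟨fun n => c n + 1, continuous_of_discreteTopology⟩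
  refine ⟨φ.comp ⟨fun y => |f y|, hf.abs⟩, fun n => ?_⟩
  have hφn : φ |f (x n)| = c n + 1 := congrFun hφ n
  simp [hφn]

def Cp.evalCLM (x : X) : Cp X →L[ℝ] ℝ :=
  (ContinuousLinearMap.proj x).comp (Cp X).subtypeL

def ContinuousMap.toCpCLM : C(X, ℝ) →L[ℝ] Cp X :=
  (ContinuousLinearMap.pi (ContinuousMap.evalCLM ℝ)).codRestrict (Cp X) fun g => g.continuous

theorem ContinuousMap.toCpCLM_surjective : Function.Surjective (toCpCLM (X := X)) :=
  fun g => ⟨⟨g, g.2⟩, rfl⟩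

def BoundedContinuousFunction.toContinuousMapCLM : (X →ᵇ ℝ) →L[ℝ] C(X, ℝ) where
  toLinearMap := toContinuousMapLinearMap X ℝ ℝ
  cont := ContinuousMap.continuous_of_continuous_uncurry _ continuous_eval

theorem Pseudocompact.toContinuousMapCLM_surjective (hX : Pseudocompact X) :
    Function.Surjective (BoundedContinuousFunction.toContinuousMapCLM (X := X)) := by
  intro g
  obtain ⟨M, hM⟩ := hX g g.continuous
  exact ⟨.ofNormedAddCommGroup g g.continuous M hM, rfl⟩

theorem Pseudocompact.of_isSigmaVNBounded_cp (h : IsSigmaVNBounded (Cp X)) : Pseudocompact X := by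
  obtain ⟨B, hB, hcov⟩ := h
  by_contra hX
  obtain ⟨x, hx⟩ := exists_seq_forall_exists_lt_of_not_pseudocompact hX
  choose M hM using fun n => (hB n).exists_abs_le (Cp.evalCLM (x n))
  obtain ⟨g, hg⟩ := hx M
  obtain ⟨n, hn⟩ := Set.mem_iUnion.1 (hcov ▸ Set.mem_univ (ContinuousMap.toCpCLM g))
  exact (hg n).not_ge ((le_abs_self _).trans (hM n _ hn))

end Pseudocompact

theorem stmt7_general (X : Type*) [TopologicalSpace X] :
    ((∃ B : ℕ → Set C(X, ℝ), (∀ n, VNBounded (B n)) ∧ (⋃ n, B n) = Set.univ) ↔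
      (∃ B : ℕ → Set ↥(Cp X), (∀ n, VNBounded (B n)) ∧ (⋃ n, B n) = Set.univ)) ∧
    ((∃ B : ℕ → Set ↥(Cp X), (∀ n, VNBounded (B n)) ∧ (⋃ n, B n) = Set.univ) ↔
      Pseudocompact X) := by
  have hkp : IsSigmaVNBounded C(X, ℝ) → IsSigmaVNBounded (Cp X) := fun h =>
    h.of_surjective _ ContinuousMap.toCpCLM_surjective
  have hpX : IsSigmaVNBounded (Cp X) → Pseudocompact X := Pseudocompact.of_isSigmaVNBounded_cp
  have hXk : Pseudocompact X → IsSigmaVNBounded C(X, ℝ) := fun hX =>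
    (isSigmaVNBounded_of_normedSpace (X →ᵇ ℝ)).of_surjective _ hX.toContinuousMapCLM_surjective
  exact ⟨⟨hkp, hXk ∘ hpX⟩, ⟨hpX, hkp ∘ hXk⟩⟩

/-- `C_k(X)` is realized as `C(X, ℝ)` with its compact-open topology (the default topology
on `ContinuousMap`). The three conditions are equivalent:
(1) `C_k(X)` is a countable union of bounded sets;
(2) `C_p(X)` is a countable union of bounded sets;
(3) `X` is pseudocompact. -/
theorem stmt7 (X : Type*) [TopologicalSpace X] [CompletelyRegularSpace X] [T2Space X] :
    ((∃ B : ℕ → Set C(X, ℝ), (∀ n, VNBounded (B n)) ∧ (⋃ n, B n) = Set.univ) ↔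
      (∃ B : ℕ → Set ↥(Cp X), (∀ n, VNBounded (B n)) ∧ (⋃ n, B n) = Set.univ)) ∧
    ((∃ B : ℕ → Set ↥(Cp X), (∀ n, VNBounded (B n)) ∧ (⋃ n, B n) = Set.univ) ↔
      Pseudocompact X) :=
  stmt7_general X
end

section
/- Let Y be a subspace of a Tychonoff space X, and let R : C_k(X) → C_k(Y) be the restriction operator R(f) = f|_Y. Then R is an open map if and only if Y is closed in X and C-embedded in X. -/
/-!
The image of the restriction map is a linear subspace of `C_k(Y)`; if the map is open this
subspace is open, hence everything, so `Y` is C-embedded. If some `x₀ ∈ closure Y \ Y`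
existed, then `f ↦ f x₀` would be determined by `f|_Y`, and a Urysohn function vanishing on a
compact set `K ⊆ Y` but equal to `1` at `x₀` would contradict openness of the image of
`{f | f x₀ < 1}`. Conversely, if `Y` is closed and C-embedded and `g` is close to `f|_Y` on the
compact set `K ∩ Y`, then `g - f|_Y` extends to `X`, and multiplying the extension by a Urysohn
function that is `1` on `Y` and `0` on the compact part of `K` where the extension is large gives
`f' ∈ C(X)` close to `f` on `K` with `f'|_Y = g`. Urysohn functions separating a compact set from
a closed one come from the Stone–Čech compactification, which is normal.
-/

open Filter Topology Set

lemma ContinuousMap.hasBasis_nhds_dist {Z E : Type*} [TopologicalSpace Z] [PseudoMetricSpace E]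
    (f : C(Z, E)) :
    (𝓝 f).HasBasis (fun p : Set Z × ℝ => IsCompact p.1 ∧ 0 < p.2)
      (fun p => {g : C(Z, E) | ∀ x ∈ p.1, dist (f x) (g x) < p.2}) :=
  nhds_basis_uniformity' Metric.uniformity_basis_dist.compactConvergenceUniformity

theorem CompletelyRegularSpace.exists_continuous_zero_one_of_isCompact {X : Type*}
    [TopologicalSpace X] [CompletelyRegularSpace X] {s t : Set X} (hs : IsCompact s)
    (ht : IsClosed t) (hd : Disjoint s t) :
    ∃ f : C(X, ℝ), EqOn f 0 s ∧ EqOn f 1 t ∧ ∀ x, f x ∈ Icc (0 : ℝ) 1 := by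
  have hd' : Disjoint (stoneCechUnit '' s) (closure (stoneCechUnit '' t)) := by
    refine disjoint_left.2 ?_
    rintro _ ⟨x, hxs, rfl⟩ hxt
    rw [← mem_preimage, ← isInducing_stoneCechUnit.closure_eq_preimage_closure_image,
      ht.closure_eq] at hxt
    exact disjoint_left.1 hd hxs hxt
  obtain ⟨f, hfs, hft, hfI⟩ := exists_continuous_zero_one_of_isClosed
    (hs.image continuous_stoneCechUnit).isClosed isClosed_closure hd'
  exact ⟨f.comp ⟨stoneCechUnit, continuous_stoneCechUnit⟩,
    fun x hx => hfs (mem_image_of_mem _ hx),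
    fun x hx => hft (subset_closure (mem_image_of_mem _ hx)), fun x => hfI _⟩

section Restriction

variable {X : Type*} [TopologicalSpace X] {Y : Set X}

theorem ContinuousMap.exists_restrict_eq_of_isOpenMap_restrict
    (hR : IsOpenMap fun f : C(X, ℝ) => f.restrict Y) (g : C(Y, ℝ)) :
    ∃ f : C(X, ℝ), f.restrict Y = g := by
  let S : Submodule ℝ C(Y, ℝ) := LinearMap.range
    (ContinuousMap.compRightAlgHom ℝ ℝ ⟨Subtype.val, continuous_subtype_val⟩).toLinearMap
  have hS : (S : Set C(Y, ℝ)) = range fun f : C(X, ℝ) => f.restrict Y := rfl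
  have hS_top : S = ⊤ := S.eq_top_of_nonempty_interior' <| by
    rw [hS, hR.isOpen_range.interior_eq]
    exact range_nonempty _
  exact (hS_top ▸ Submodule.mem_top : g ∈ S)

theorem isClosed_of_isOpenMap_restrict [CompletelyRegularSpace X] [T1Space X]
    (hR : IsOpenMap fun f : C(X, ℝ) => f.restrict Y) : IsClosed Y := by
  refine closure_subset_iff_isClosed.1 fun x₀ hx₀ => by_contra fun hx₀Y => ?_
  have hW : (fun f : C(X, ℝ) => f.restrict Y) '' {f | f x₀ < 1} ∈ 𝓝 ((0 : C(X, ℝ)).restrict Y) :=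
    hR.image_mem_nhds ((isOpen_lt (continuous_eval_const x₀) continuous_const).mem_nhds
      (by simp))
  obtain ⟨⟨K, ε⟩, ⟨hK, hε⟩, hKε⟩ := (ContinuousMap.hasBasis_nhds_dist _).mem_iff.1 hW
  obtain ⟨u, hu0, hu1, -⟩ := CompletelyRegularSpace.exists_continuous_zero_one_of_isCompact
    (hK.image continuous_subtype_val) (isClosed_singleton (x := x₀))
    (disjoint_singleton_right.2 <| by rintro ⟨y, -, rfl⟩; exact hx₀Y y.2)
  obtain ⟨h, hh1, hhu⟩ := hKε (show u.restrict Y ∈ _ from fun y hy => by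
    simpa [hu0 (mem_image_of_mem _ hy)] using hε)
  have hhu_closure : EqOn h u (closure Y) :=
    EqOn.closure (fun y hy => congr($hhu ⟨y, hy⟩)) h.continuous u.continuous
  have hhx₀ : h x₀ < 1 := hh1
  rw [hhu_closure hx₀, hu1 rfl] at hhx₀
  exact lt_irrefl _ hhx₀

theorem exists_eqOn_abs_lt_of_isCompact [CompletelyRegularSpace X] (hY : IsClosed Y)
    {K : Set X} (hK : IsCompact K) {ε : ℝ} (hε : 0 < ε) (e : C(X, ℝ))
    (he : ∀ x ∈ K ∩ Y, |e x| < ε) :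
    ∃ e' : C(X, ℝ), EqOn e' e Y ∧ ∀ x ∈ K, |e' x| < ε := by
  let V := {x | |e x| < ε}
  have hV : IsOpen V := isOpen_lt (continuous_abs.comp e.continuous) continuous_const
  obtain ⟨θ, hθ0, hθ1, hθI⟩ := CompletelyRegularSpace.exists_continuous_zero_one_of_isCompact
    (hK.diff hV) hY (disjoint_left.2 fun x hx hxY => hx.2 (he x ⟨hx.1, hxY⟩))
  refine ⟨e * θ, fun y hy => by simp [hθ1 hy], fun x hx => ?_⟩
  by_cases hxV : x ∈ V
  · calc |(e * θ) x| = |e x| * θ x := by simp [abs_mul, abs_of_nonneg (hθI x).1]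
      _ ≤ |e x| := mul_le_of_le_one_right (abs_nonneg _) (hθI x).2
      _ < ε := hxV
  · simpa [hθ0 ⟨hx, hxV⟩] using hε

theorem isOpenMap_restrict_of_isClosed [CompletelyRegularSpace X] (hY : IsClosed Y)
    (hext : ∀ g : C(Y, ℝ), ∃ f : C(X, ℝ), f.restrict Y = g) :
    IsOpenMap fun f : C(X, ℝ) => f.restrict Y := by
  refine IsOpenMap.of_nhds_le fun f₀ => ((ContinuousMap.hasBasis_nhds_dist _).le_basis_iff
    ((ContinuousMap.hasBasis_nhds_dist f₀).map _)).2 ?_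
  rintro ⟨K, ε⟩ ⟨hK, hε⟩
  refine ⟨(Subtype.val ⁻¹' K, ε), ⟨hY.isClosedEmbedding_subtypeVal.isCompact_preimage hK, hε⟩,
    fun g hg => ?_⟩
  obtain ⟨e, he⟩ := hext (g - f₀.restrict Y)
  have he_apply (y : Y) : e y = g y - f₀ y := congr($he y)
  obtain ⟨e', he'Y, he'K⟩ := exists_eqOn_abs_lt_of_isCompact hY hK hε e fun x ⟨hxK, hxY⟩ => by
    simpa [he_apply ⟨x, hxY⟩, Real.dist_eq, abs_sub_comm] using hg ⟨x, hxY⟩ hxK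
  refine ⟨f₀ + e', fun x hx => by simpa [Real.dist_eq, abs_sub_comm] using he'K x hx, ?_⟩
  ext y
  simp [he'Y y.2, he_apply]

end Restriction

/-- For a subspace `Y` of a Tychonoff space `X`, the restriction operator
`R : C_k(X) → C_k(Y)` (both spaces of continuous real-valued functions carrying the
compact-open topology, the default topology on `ContinuousMap`) is an open map if and
only if `Y` is closed in `X` and C-embedded in `X` (every continuous real-valued function
on `Y` extends continuously over `X`). -/
theorem stmt9 (X : Type*) [TopologicalSpace X] [CompletelyRegularSpace X] [T2Space X]
    (Y : Set X) :
    IsOpenMap (fun f : C(X, ℝ) => f.restrict Y) ↔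
      (IsClosed Y ∧ ∀ g : C(↥Y, ℝ), ∃ f : C(X, ℝ), f.restrict Y = g) :=
  ⟨fun hR => ⟨isClosed_of_isOpenMap_restrict hR,
      ContinuousMap.exists_restrict_eq_of_isOpenMap_restrict hR⟩,
    fun ⟨hY, hext⟩ => isOpenMap_restrict_of_isClosed hY hext⟩
end

section
/- Every space X in the class HS is pseudocompact, has cardinality 𝔠 = 2^ℵ₀, and every compact subspace of X is finite. -/
open Filter Topology

/-- An ultrafilter on `ℕ` is free if it is not principal. -/
def IsFreeUltrafilter (u : Ultrafilter ℕ) : Prop := ∀ n : ℕ, u ≠ pure n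

/-- A subset `X` of `βℕ` (realized as `Ultrafilter ℕ` with its usual compact topology,
`ℕ` being identified with the principal ultrafilters via `pure`) is in the class HS if
there is an assignment `A ↦ u_A` of a free ultrafilter containing `A` to each infinite
`A ⊆ ℕ` such that `X = ℕ ∪ {u_A : A infinite}`. -/
def IsHS (X : Set (Ultrafilter ℕ)) : Prop :=
  ∃ u : Set ℕ → Ultrafilter ℕ,
    (∀ A : Set ℕ, A.Infinite → A ∈ u A ∧ IsFreeUltrafilter (u A)) ∧
    X = Set.range (pure : ℕ → Ultrafilter ℕ) ∪ {v | ∃ A : Set ℕ, A.Infinite ∧ v = u A}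

/-!
A continuous `f : X → ℝ` unbounded on the dense set `ℕ` would tend to infinity along some
infinite `A ⊆ ℕ`, hence along the free ultrafilter `u_A ∈ X`, contradicting continuity at `u_A`.
`X` has at most `𝔠` points, and the points `u_A` for an almost disjoint family of `𝔠` sets `A`
are distinct. An infinite closed `K ⊆ βℕ` contains points `d k` carrying pairwise disjoint sets
`T k ∈ d k`; then `v ↦ lim_v d` embeds `βℕ` into `K`, and `|βℕ| = 2^𝔠 > 𝔠` by Hausdorff's
independent family.
-/

open Set Function Cardinal

namespace IsFreeUltrafilter

variable {u : Ultrafilter ℕ}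

lemma le_cofinite (hu : IsFreeUltrafilter u) : (u : Filter ℕ) ≤ cofinite :=
  u.le_cofinite_or_eq_pure.resolve_right fun ⟨n, hn⟩ => hu n hn

lemma infinite_of_mem (hu : IsFreeUltrafilter u) {s : Set ℕ} (hs : s ∈ u) : s.Infinite :=
  fun hfin => u.compl_mem_iff_notMem.mp (hu.le_cofinite hfin.compl_mem_cofinite) hs

end IsFreeUltrafilter

lemma exists_infinite_tendsto_atTop_of_not_bddAbove {g : ℕ → ℝ} (hg : ¬BddAbove (range g)) :
    ∃ A : Set ℕ, A.Infinite ∧ Tendsto g (cofinite ⊓ 𝓟 A) atTop := by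
  have hex : ∀ k : ℕ, ∃ n, (k : ℝ) < g n := fun k => by simpa using not_bddAbove_iff.mp hg k
  choose m hm using hex
  refine ⟨range m, fun hfin => ?_, tendsto_atTop.2 fun N => ?_⟩
  · obtain ⟨b, hb⟩ := (hfin.image g).bddAbove
    obtain ⟨k, hk⟩ := exists_nat_gt b
    exact (hk.trans (hm k)).not_ge (hb (mem_image_of_mem g (mem_range_self k)))
  · rw [eventually_inf_principal, eventually_cofinite]
    refine ((finite_Iio ⌈N⌉₊).image m).subset fun n hn => ?_
    simp only [mem_ofPred_eq, Classical.not_imp, not_le] at hn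
    obtain ⟨⟨k, rfl⟩, hk⟩ := hn
    exact ⟨k, Nat.lt_ceil.2 ((hm k).trans hk), rfl⟩

lemma pseudocompact_of_forall_infinite {X : Set (Ultrafilter ℕ)} (hpure : ∀ n : ℕ, pure n ∈ X)
    (hfree : ∀ A : Set ℕ, A.Infinite → ∃ v ∈ X, IsFreeUltrafilter v ∧ A ∈ v) :
    Pseudocompact X := by
  intro f hf
  set ι : ℕ → X := fun n => ⟨pure n, hpure n⟩
  have hι : ∀ x : X, Tendsto ι (x : Ultrafilter ℕ) (𝓝 x) := fun x =>
    tendsto_subtype_rng.2 (Ultrafilter.tendsto_pure_self (x : Ultrafilter ℕ))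
  have hbdd : BddAbove (range fun n => |f (ι n)|) := by
    by_contra h
    obtain ⟨A, hA, hlim⟩ := exists_infinite_tendsto_atTop_of_not_bddAbove h
    obtain ⟨v, hvX, hv, hAv⟩ := hfree A hA
    have hconv : Tendsto (fun n => |f (ι n)|) v (𝓝 |f ⟨v, hvX⟩|) :=
      ((continuous_abs.comp hf).tendsto _).comp (hι ⟨v, hvX⟩)
    exact not_tendsto_atTop_of_tendsto_nhds hconv
      (hlim.mono_left (le_inf hv.le_cofinite (le_principal_iff.2 hAv)))
  obtain ⟨M, hM⟩ := hbdd
  have hdense : DenseRange ι := fun x =>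
    mem_closure_of_tendsto (hι x) (Eventually.of_forall fun n => mem_range_self n)
  exact ⟨M, fun x => hdense.induction_on x (isClosed_le (continuous_abs.comp hf) continuous_const)
    fun n => hM (mem_range_self n)⟩

lemma exists_pairwise_inter_finite :
    ∃ A : (ℕ → Bool) → Set ℕ, (∀ σ, (A σ).Infinite) ∧
      Pairwise fun σ τ => (A σ ∩ A τ).Finite := by
  -- `A σ` codes the finite prefixes of the branch `σ` of the binary tree.
  set prefixCode : (ℕ → Bool) → ℕ → ℕ := fun σ k => Encodable.encode ((List.range k).map σ)
  have hcode : ∀ {σ τ k l}, prefixCode σ k = prefixCode τ l →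
      k = l ∧ ∀ i < k, σ i = τ i := by
    intro σ τ k l h
    have hlist : (List.range k).map σ = (List.range l).map τ := Encodable.encode_injective h
    obtain rfl : k = l := by simpa using congrArg List.length hlist
    exact ⟨rfl, fun i hi => List.map_inj_left.mp hlist i (List.mem_range.2 hi)⟩
  refine ⟨fun σ => range (prefixCode σ), fun σ => infinite_range_of_injective
    fun k l h => (hcode h).1, fun σ τ hne => ?_⟩
  obtain ⟨i, hi⟩ := Function.ne_iff.mp hne
  refine ((finite_Iic i).image (prefixCode σ)).subset ?_
  rintro _ ⟨⟨k, rfl⟩, ⟨l, hl⟩⟩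
  obtain ⟨rfl, hagree⟩ := hcode hl
  exact ⟨l, not_lt.1 fun hik => hi (hagree i hik).symm, rfl⟩

lemma continuum_le_mk_of_forall_infinite {X : Set (Ultrafilter ℕ)}
    (hfree : ∀ A : Set ℕ, A.Infinite → ∃ v ∈ X, IsFreeUltrafilter v ∧ A ∈ v) : 𝔠 ≤ #X := by
  obtain ⟨A, hA, hAdisj⟩ := exists_pairwise_inter_finite
  choose v hvX hv hAv using fun σ => hfree (A σ) (hA σ)
  have hinj : Injective fun σ => (⟨v σ, hvX σ⟩ : X) := fun σ τ hστ => by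
    by_contra hne
    have hvστ : v σ = v τ := congrArg Subtype.val hστ
    have hmem : A σ ∩ A τ ∈ v σ := inter_mem (hAv σ) (hvστ ▸ hAv τ)
    exact IsFreeUltrafilter.infinite_of_mem (hv σ) hmem (hAdisj hne)
  calc 𝔠 = #(ℕ → Bool) := by simp
    _ ≤ #X := mk_le_of_injective hinj

open Classical in
/-- Hausdorff's independent family of `𝔠` subsets of a countable set. -/
def independentFamily (A : Set ℕ) : Set (ℕ × Finset (Finset ℕ)) :=
  {p | {i ∈ Finset.range p.1 | i ∈ A} ∈ p.2}

open Classical in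
lemma eventually_filter_range_ne {A B : Set ℕ} (h : A ≠ B) :
    ∀ᶠ n in atTop, {i ∈ Finset.range n | i ∈ A} ≠ {i ∈ Finset.range n | i ∈ B} := by
  obtain ⟨i, hi⟩ : ∃ i, ¬(i ∈ A ↔ i ∈ B) := by
    by_contra! hAB
    exact h (ext hAB)
  filter_upwards [eventually_gt_atTop i] with n hn heq
  exact hi (by simpa [hn] using Finset.ext_iff.mp heq i)

lemma exists_mem_independentFamily_iff (𝒞 : Finset (Set ℕ)) (𝒮 : Set (Set ℕ)) :
    ∃ p, ∀ C ∈ 𝒞, p ∈ independentFamily C ↔ C ∈ 𝒮 := by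
  classical
  have hsep : ∀ᶠ n in atTop, ∀ C ∈ 𝒞, ∀ D ∈ 𝒞, C ≠ D →
      {i ∈ Finset.range n | i ∈ C} ≠ {i ∈ Finset.range n | i ∈ D} := by
    refine (Finset.eventually_all _).2 fun C _ => (Finset.eventually_all _).2 fun D _ => ?_
    by_cases hCD : C = D
    · exact Eventually.of_forall fun _ h => absurd hCD h
    · exact (eventually_filter_range_ne hCD).mono fun _ hn _ => hn
  obtain ⟨n, hn⟩ := hsep.exists
  refine ⟨(n, {C ∈ 𝒞 | C ∈ 𝒮}.image fun C => {i ∈ Finset.range n | i ∈ C}), fun C hC => ?_⟩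
  simp only [independentFamily, mem_ofPred_eq, Finset.mem_image, Finset.mem_filter]
  refine ⟨fun ⟨D, ⟨hD, hDS⟩, hDC⟩ => ?_, fun hCS => ⟨C, ⟨hC, hCS⟩, rfl⟩⟩
  by_contra hCD
  exact hn D hD C hC (fun h => hCD (h ▸ hDS)) hDC

lemma exists_ultrafilter_mem_independentFamily_iff (𝒮 : Set (Set ℕ)) :
    ∃ w : Ultrafilter (ℕ × Finset (Finset ℕ)), ∀ A, independentFamily A ∈ w ↔ A ∈ 𝒮 := by
  classical
  set J : Set ℕ → Set (ℕ × Finset (Finset ℕ)) := fun A =>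
    if A ∈ 𝒮 then independentFamily A else (independentFamily A)ᶜ
  obtain ⟨w, hw⟩ := Ultrafilter.exists_ultrafilter_of_finite_inter_nonempty (range J) fun T hT => by
    obtain ⟨𝒞, -, rfl⟩ := Finset.subset_set_image_iff.mp (image_univ (f := J) ▸ hT)
    obtain ⟨p, hp⟩ := exists_mem_independentFamily_iff 𝒞 𝒮
    refine ⟨p, ?_⟩
    simp only [Finset.coe_image, sInter_image, mem_iInter₂]
    intro C hC
    by_cases hCS : C ∈ 𝒮 <;> simp [J, hCS, hp C hC]
  refine ⟨w, fun A => ⟨fun hA => by_contra fun hAS => ?_, fun hAS => ?_⟩⟩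
  · have := hw (mem_range_self (f := J) A)
    simp only [J, if_neg hAS] at this
    exact Ultrafilter.compl_mem_iff_notMem.mp this hA
  · simpa [J, hAS] using hw (mem_range_self (f := J) A)

lemma Cardinal.continuum_lt_mk_ultrafilter_nat : 𝔠 < #(Ultrafilter ℕ) := by
  choose w hw using exists_ultrafilter_mem_independentFamily_iff
  have hwinj : Injective w := fun 𝒮 𝒮' h => ext fun A => by rw [← hw, h, hw]
  obtain ⟨e⟩ : Nonempty (ℕ × Finset (Finset ℕ) ≃ ℕ) := ⟨Denumerable.eqv _⟩
  have hmap : Injective (Ultrafilter.map e) := fun v v' h =>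
    Ultrafilter.coe_injective (map_injective e.injective (congrArg Ultrafilter.toFilter h))
  calc 𝔠 < 2 ^ 𝔠 := cantor 𝔠
    _ = #(Set (Set ℕ)) := by simp
    _ ≤ #(Ultrafilter ℕ) := mk_le_of_injective (hmap.comp hwinj)

namespace Ultrafilter

variable {ι α : Type*}

lemma mem_bind_iff {v : Ultrafilter ι} {d : ι → Ultrafilter α} {s : Set α} :
    s ∈ v.bind d ↔ {i | s ∈ d i} ∈ v :=
  Iff.rfl

lemma tendsto_bind (v : Ultrafilter ι) (d : ι → Ultrafilter α) : Tendsto d v (𝓝 (v.bind d)) := by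
  rw [Tendsto, ← coe_map]
  exact ultrafilter_converges_iff.mpr rfl

lemma bind_injective_of_pairwise_disjoint {d : ι → Ultrafilter α} {T : ι → Set α}
    (hT : ∀ i, T i ∈ d i) (hdisj : Pairwise (Disjoint on T)) :
    Injective fun v : Ultrafilter ι => v.bind d := by
  intro v w (hvw : v.bind d = w.bind d)
  refine coe_le_coe.mp fun M hM => ?_
  have hU : (⋃ i ∈ M, T i) ∈ w.bind d := mem_bind_iff.2 (mem_of_superset hM fun i hi =>
    mem_of_superset (hT i) (subset_biUnion_of_mem (u := T) hi))
  have hU' : (⋃ i ∈ M, T i) ∈ v.bind d := hvw ▸ hU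
  refine mem_of_superset (mem_bind_iff.1 hU') fun i hi => by_contra fun hiM => ?_
  have hdisjU : Disjoint (T i) (⋃ j ∈ M, T j) :=
    disjoint_iUnion₂_right.2 fun j hj => hdisj fun hij => hiM (hij ▸ hj)
  exact empty_notMem (hdisjU.inter_eq ▸ inter_mem (hT i) hi : ∅ ∈ d i)

lemma exists_pairwise_disjoint_mem_of_mem_iff_eq {d : ℕ → Ultrafilter α} {S : ℕ → Set α}
    (hS : ∀ i j, S i ∈ d j ↔ i = j) :
    ∃ T : ℕ → Set α, (∀ i, T i ∈ d i) ∧ Pairwise (Disjoint on T) := by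
  refine ⟨disjointed S, fun i => ?_, disjoint_disjointed S⟩
  rw [disjointed_eq_inter_compl]
  refine inter_mem ((hS i i).2 rfl) ((biInter_mem (finite_Iio i)).2 fun j hj => ?_)
  exact compl_mem_iff_notMem.2 fun h => (ne_of_lt hj) ((hS j i).1 h)

lemma exists_seq_pairwise_disjoint_mem {K : Set (Ultrafilter α)} (hK : K.Infinite) :
    ∃ (d : ℕ → Ultrafilter α) (T : ℕ → Set α), (∀ i, d i ∈ K) ∧ (∀ i, T i ∈ d i) ∧
      Pairwise (Disjoint on T) := by
  have : Infinite K := hK.to_subtype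
  obtain ⟨U, hUne, hUo, hUdisj⟩ := exists_seq_infinite_isOpen_pairwise_disjoint K
  choose x hxU using fun i => (hUne i).nonempty
  have hS : ∀ i, ∃ S ∈ (x i : Ultrafilter α), ∀ j, S ∈ (x j : Ultrafilter α) → x j ∈ U i := by
    intro i
    obtain ⟨V, hVo, hVU⟩ := isOpen_induced_iff.mp (hUo i)
    have hxV : (x i : Ultrafilter α) ∈ V := by simpa [← hVU] using hxU i
    obtain ⟨_, ⟨S, rfl⟩, hxS, hSV⟩ := ultrafilterBasis_is_basis.exists_subset_of_mem_open hxV hVo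
    exact ⟨S, hxS, fun j hj => by rw [← hVU]; exact hSV hj⟩
  choose S hSx hSU using hS
  obtain ⟨T, hT, hTdisj⟩ := exists_pairwise_disjoint_mem_of_mem_iff_eq
    (d := fun i => (x i : Ultrafilter α)) fun i j =>
      ⟨fun h => hUdisj.eq (not_disjoint_iff.2 ⟨x j, hSU i j h, hxU j⟩), fun h => h ▸ hSx i⟩
  exact ⟨fun i => x i, T, fun i => (x i).2, hT, hTdisj⟩

lemma exists_injective_of_isClosed_of_infinite {K : Set (Ultrafilter α)} (hKc : IsClosed K)
    (hK : K.Infinite) : ∃ Φ : Ultrafilter ℕ → Ultrafilter α, Injective Φ ∧ ∀ v, Φ v ∈ K := by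
  obtain ⟨d, T, hdK, hT, hTdisj⟩ := exists_seq_pairwise_disjoint_mem hK
  refine ⟨fun v => v.bind d, bind_injective_of_pairwise_disjoint hT hTdisj, fun v => ?_⟩
  exact hKc.closure_subset_iff.2 (range_subset_iff.2 hdK)
    (mem_closure_of_tendsto (tendsto_bind v d) (Eventually.of_forall mem_range_self))

end Ultrafilter

lemma finite_of_isClosed_of_mk_le_continuum {K : Set (Ultrafilter ℕ)} (hKc : IsClosed K)
    (hK : #K ≤ 𝔠) : K.Finite := by
  by_contra hinf
  obtain ⟨Φ, hΦ, hΦK⟩ := Ultrafilter.exists_injective_of_isClosed_of_infinite hKc hinf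
  have hle : #(Ultrafilter ℕ) ≤ #K :=
    mk_le_of_injective (f := fun v => (⟨Φ v, hΦK v⟩ : K)) fun v w h => hΦ (congrArg Subtype.val h)
  exact (continuum_lt_mk_ultrafilter_nat.trans_le hle).not_ge hK

namespace IsHS

variable {X : Set (Ultrafilter ℕ)}

lemma pure_mem (hX : IsHS X) (n : ℕ) : pure n ∈ X := by
  obtain ⟨u, -, rfl⟩ := hX
  exact Or.inl (mem_range_self n)

lemma exists_free_mem (hX : IsHS X) {A : Set ℕ} (hA : A.Infinite) :
    ∃ v ∈ X, IsFreeUltrafilter v ∧ A ∈ v := by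
  obtain ⟨u, hu, rfl⟩ := hX
  exact ⟨u A, Or.inr ⟨A, hA, rfl⟩, (hu A hA).2, (hu A hA).1⟩

lemma mk_le_continuum (hX : IsHS X) : #X ≤ 𝔠 := by
  obtain ⟨u, -, rfl⟩ := hX
  have hsub : {v | ∃ A : Set ℕ, A.Infinite ∧ v = u A} ⊆ range u := fun _ ⟨A, _, hA⟩ => ⟨A, hA.symm⟩
  refine (mk_union_le _ _).trans (add_le_of_le aleph0_le_continuum ?_ ?_)
  · exact mk_range_le.trans (by simpa using aleph0_le_continuum)
  · exact (mk_le_mk_of_subset hsub).trans (mk_range_le.trans (by simp))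

end IsHS

theorem stmt10 (X : Set (Ultrafilter ℕ)) (hX : IsHS X) :
    Pseudocompact ↥X ∧ Cardinal.mk ↥X = Cardinal.continuum ∧
      (∀ K : Set (Ultrafilter ℕ), K ⊆ X → IsCompact K → K.Finite) := by
  have hcard : #X = 𝔠 :=
    hX.mk_le_continuum.antisymm (continuum_le_mk_of_forall_infinite fun _ => hX.exists_free_mem)
  refine ⟨pseudocompact_of_forall_infinite hX.pure_mem (fun _ => hX.exists_free_mem), hcard,
    fun K hKX hK => ?_⟩
  exact finite_of_isClosed_of_mk_le_continuum hK.isClosed ((mk_le_mk_of_subset hKX).trans hcard.le)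
end

section
/- Let X be a subspace of βℕ with ℕ ⊆ X. The following are equivalent: (1) X belongs to the class HS; (2) X is pseudocompact and has cardinality 𝔠 = 2^ℵ₀; (3) X has cardinality 𝔠 and every infinite subset S of ℕ has an accumulation point in X (a point x ∈ X every neighbourhood of which contains infinitely many elements of S). -/
open Filter Topology

/-!
For infinite `A ⊆ ℕ`, the accumulation points of `A` in `βℕ` are exactly the points of
`A* = cl A ∩ ω*`, so (3) says that `|X| = 𝔠` and that `X` meets every `A*`.

The points of `ℕ` are isolated and dense in `X`. Hence if an infinite `A ⊆ ℕ` has no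
accumulation point in `X`, the function equal to `n` at `n ∈ A` and to `0` elsewhere is locally
constant and unbounded; conversely an unbounded continuous function grows along some infinite
`A ⊆ ℕ`, and continuity fails at an accumulation point of `A`. So `X` is pseudocompact iff it
meets every `A*`.

An HS space meets every `A*` by definition, and it has size `𝔠` because the points `u_A` for `A`
in an almost disjoint family of size `𝔠` are pairwise distinct. Conversely, if `|X| ≤ 𝔠` and `X`
meets every `A*`, choose injectively a member `A_y ∈ y` for each free `y ∈ X`, put
`u_{A_y} = y`, and take any `u_A ∈ X ∩ A*` for the remaining `A`.
-/

lemma Ultrafilter.singleton_mem_iff {α : Type*} {u : Ultrafilter α} {a : α} :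
    ({a} : Set α) ∈ u ↔ u = pure a := by
  refine ⟨fun h => ?_, fun h => h ▸ Ultrafilter.mem_pure.mpr rfl⟩
  obtain ⟨b, rfl, hb⟩ := Ultrafilter.eq_pure_of_finite_mem (Set.finite_singleton a) h
  exact hb

lemma Ultrafilter.isOpen_singleton_pure {α : Type*} (a : α) :
    IsOpen {(pure a : Ultrafilter α)} := by
  convert ultrafilter_isOpen_basic {a}
  exact Set.ext fun u => Ultrafilter.singleton_mem_iff.symm

lemma IsFreeUltrafilter.infinite_of_mem_s12 {u : Ultrafilter ℕ} (hu : IsFreeUltrafilter u)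
    {A : Set ℕ} (hA : A ∈ u) : A.Infinite := fun hfin =>
  let ⟨n, _, hn⟩ := Ultrafilter.eq_pure_of_finite_mem hfin hA
  hu n hn

/-- `A* = cl A ∩ ω*`. -/
def remainder (A : Set ℕ) : Set (Ultrafilter ℕ) := {u | A ∈ u ∧ IsFreeUltrafilter u}

lemma forall_mem_nhds_inter_preimage_pure_infinite_iff {x : Ultrafilter ℕ} {S : Set ℕ} :
    (∀ U ∈ 𝓝 x, (S ∩ pure ⁻¹' U).Infinite) ↔ x ∈ remainder S := by
  refine ⟨fun h => ⟨?_, fun n hn => ?_⟩, fun ⟨hS, hfree⟩ U hU => ?_⟩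
  · by_contra hS
    refine h _ ((ultrafilter_isOpen_basic Sᶜ).mem_nhds (x.compl_mem_iff_notMem.mpr hS)) ?_
    exact Set.finite_empty.subset fun n hn => (Ultrafilter.mem_pure.mp hn.2) hn.1
  · refine h _ ((Ultrafilter.isOpen_singleton_pure n).mem_nhds hn) ?_
    exact (Set.finite_singleton n).subset fun m hm => Ultrafilter.pure_injective hm.2
  · obtain ⟨-, ⟨s, rfl⟩, hs, hsU⟩ := ultrafilterBasis_is_basis.mem_nhds_iff.mp hU
    exact (hfree.infinite_of_mem_s12 (inter_mem hS hs)).mono fun n hn =>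
      ⟨hn.1, hsU (Ultrafilter.mem_pure.mpr hn.2)⟩

lemma forall_isOpen_inter_image_pure_infinite_iff {x : Ultrafilter ℕ} {S : Set ℕ} :
    (∀ U : Set (Ultrafilter ℕ), IsOpen U → x ∈ U → (U ∩ pure '' S).Infinite) ↔
      x ∈ remainder S := by
  rw [← forall_mem_nhds_inter_preimage_pure_infinite_iff, (nhds_basis_opens x).forall_iff
    fun U V hUV h => h.mono (Set.inter_subset_inter_right _ (Set.preimage_mono hUV))]
  have hinf (U : Set (Ultrafilter ℕ)) :
      (U ∩ pure '' S).Infinite ↔ (S ∩ pure ⁻¹' U).Infinite := by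
    rw [Set.inter_comm, ← Set.image_inter_preimage,
      Set.infinite_image_iff Ultrafilter.pure_injective.injOn]
  simp only [hinf, and_imp]
  exact forall_congr' fun U => forall_comm

section ClusterPoints

variable {X : Type*} [TopologicalSpace X] {e : ℕ → X}

lemma pseudocompact_of_forall_exists_clusterPt (he : DenseRange e)
    (hacc : ∀ S : Set ℕ, S.Infinite → ∃ x, ∀ U ∈ 𝓝 x, (S ∩ e ⁻¹' U).Infinite) :
    Pseudocompact X := by
  intro f hf
  by_contra! hunbdd
  have hlarge : ∀ C : ℝ, {n | C < |f (e n)|}.Infinite := by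
    intro C hfin
    obtain ⟨B, hB⟩ := (hfin.image fun n => |f (e n)|).bddAbove
    have hbound : ∀ n, |f (e n)| ≤ max C B := fun n => by
      by_cases hn : C < |f (e n)|
      · exact (hB ⟨n, hn, rfl⟩).trans (le_max_right _ _)
      · exact (not_lt.mp hn).trans (le_max_left _ _)
    obtain ⟨x, hx⟩ := hunbdd (max C B)
    exact hx.not_ge <| he.induction_on (p := fun x => |f x| ≤ max C B) x
      (isClosed_le (continuous_abs.comp hf) continuous_const) hbound
  obtain ⟨φ, hφ, hφf⟩ := extraction_forall_of_frequently
    (P := fun n k => (n : ℝ) < |f (e k)|) (Nat.frequently_atTop_iff_infinite.mpr <| hlarge ·)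
  obtain ⟨x, hx⟩ := hacc (Set.range φ) (Set.infinite_range_of_injective hφ.injective)
  have hnear : {y | |f y| < |f x| + 1} ∈ 𝓝 x :=
    (continuous_abs.comp hf).continuousAt.eventually_lt continuousAt_const (lt_add_one _)
  refine hx _ hnear ((Set.finite_lt_nat ⌈|f x| + 1⌉₊).image φ |>.subset ?_)
  rintro - ⟨⟨k, rfl⟩, hk⟩
  exact ⟨k, Nat.lt_ceil.mpr ((hφf k).trans hk), rfl⟩

lemma exists_clusterPt_of_pseudocompact [T1Space X] (he : Function.Injective e)
    (hiso : ∀ n, IsOpen {e n}) (hp : Pseudocompact X) {S : Set ℕ} (hS : S.Infinite) :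
    ∃ x, ∀ U ∈ 𝓝 x, (S ∩ e ⁻¹' U).Infinite := by
  by_contra! hfin
  obtain ⟨f, hfe, hf0⟩ : ∃ f : X → ℝ,
      (∀ n, f (e n) = S.indicator (↑) n) ∧ ∀ y, (¬∃ n, e n = y) → f y = 0 :=
    ⟨_, he.extend_apply _ _, fun y hy => Function.extend_apply' _ _ y hy⟩
  have hf : IsLocallyConstant f := by
    rw [IsLocallyConstant.iff_eventually_eq]
    intro x
    by_cases hx : ∃ n, e n = x
    · obtain ⟨n, rfl⟩ := hx
      filter_upwards [(hiso n).mem_nhds rfl] with y hy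
      rw [hy]
    · obtain ⟨U, hU, hUfin⟩ := hfin x
      have hV : U \ e '' (S ∩ e ⁻¹' U) ∈ 𝓝 x :=
        sdiff_mem hU ((hUfin.image e).isClosed.compl_mem_nhds fun ⟨n, _, hn⟩ => hx ⟨n, hn⟩)
      filter_upwards [hV] with y ⟨hyU, hy⟩
      rw [hf0 x hx]
      by_cases hy' : ∃ n, e n = y
      · obtain ⟨n, rfl⟩ := hy'
        exact (hfe n).trans (Set.indicator_of_notMem (fun hn => hy ⟨n, ⟨hn, hyU⟩, rfl⟩) _)
      · exact hf0 y hy'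
  obtain ⟨M, hM⟩ := hp f hf.continuous
  obtain ⟨n, hnS, hnM⟩ := hS.exists_gt ⌈M⌉₊
  have := hM (e n)
  rw [hfe, Set.indicator_of_mem hnS, Nat.abs_cast] at this
  exact (Nat.le_ceil M |>.trans_lt (Nat.cast_lt.mpr hnM)).not_ge this

end ClusterPoints

lemma forall_mem_nhds_inter_preimage_codRestrict_infinite_iff {X : Set (Ultrafilter ℕ)}
    (hX : ∀ n, pure n ∈ X) (x : X) {S : Set ℕ} :
    (∀ V ∈ 𝓝 x, (S ∩ Set.codRestrict pure X hX ⁻¹' V).Infinite) ↔ x.1 ∈ remainder S := by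
  rw [← forall_mem_nhds_inter_preimage_pure_infinite_iff]
  refine ⟨fun h U hU => h _ (continuous_subtype_val.continuousAt.preimage_mem_nhds hU),
    fun h V hV => ?_⟩
  obtain ⟨U, hU, hUV⟩ := (mem_nhds_subtype X x V).mp hV
  exact (h U hU).mono (Set.inter_subset_inter_right _ fun n hn => hUV hn)

lemma pseudocompact_iff_forall_infinite_nonempty_inter_remainder {X : Set (Ultrafilter ℕ)}
    (hX : ∀ n, pure n ∈ X) :
    Pseudocompact X ↔ ∀ A : Set ℕ, A.Infinite → (X ∩ remainder A).Nonempty := by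
  have hdense : DenseRange (Set.codRestrict pure X hX) := by
    rw [DenseRange, Subtype.dense_iff, ← Set.range_comp]
    exact fun x _ => denseRange_pure x
  have hiso (n : ℕ) : IsOpen {Set.codRestrict pure X hX n} := by
    convert (Ultrafilter.isOpen_singleton_pure n).preimage continuous_subtype_val
    ext y
    simp [Subtype.ext_iff]
  refine ⟨fun hp A hA => ?_,
    fun h => pseudocompact_of_forall_exists_clusterPt hdense fun A hA => ?_⟩
  · obtain ⟨x, hx⟩ := exists_clusterPt_of_pseudocompact
      ((Set.injective_codRestrict hX).mpr Ultrafilter.pure_injective) hiso hp hA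
    exact ⟨x, x.2, (forall_mem_nhds_inter_preimage_codRestrict_infinite_iff hX x).mp hx⟩
  · obtain ⟨x, hxX, hx⟩ := h A hA
    exact ⟨⟨x, hxX⟩, (forall_mem_nhds_inter_preimage_codRestrict_infinite_iff hX _).mpr hx⟩

open Classical in
/-- The branches `Set.range (prefixCode x)` of the binary tree form an almost disjoint family of
size `𝔠`. -/
noncomputable def prefixCode (x : Set ℕ) (n : ℕ) : ℕ :=
  Encodable.encode ((List.range n).map fun i => decide (i ∈ x))

lemma prefixCode_injective (x : Set ℕ) : Function.Injective (prefixCode x) := fun m n h => by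
  simpa using congrArg List.length (Encodable.encode_injective h)

lemma finite_range_prefixCode_inter {x y : Set ℕ} (hxy : x ≠ y) :
    (Set.range (prefixCode x) ∩ Set.range (prefixCode y)).Finite := by
  obtain ⟨i, hi⟩ : ∃ i, ¬(i ∈ x ↔ i ∈ y) := by
    by_contra! h
    exact hxy (Set.ext h)
  refine ((Set.finite_Iic i).image (prefixCode x)).subset ?_
  rintro - ⟨⟨m, rfl⟩, ⟨n, hn⟩⟩
  have hlists := Encodable.encode_injective hn
  obtain rfl : n = m := by simpa using congrArg List.length hlists
  refine ⟨n, Set.mem_Iic.mpr (not_lt.mp fun hin => hi ?_), rfl⟩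
  simpa using (List.map_inj_left.mp hlists i (List.mem_range.mpr hin)).symm

/-- An ultrafilter on `ℕ` contains the numbers of some parity `b`; adding a copy of `a` in the
other parity gives one of its members from which `a` can be read off. -/
def withParity (b : Bool) (a : Set ℕ) : Set ℕ := {n | n.bodd = b ∨ n.div2 ∈ a}

lemma bit_mem_withParity_iff {b c : Bool} {a : Set ℕ} {k : ℕ} :
    Nat.bit b k ∈ withParity c a ↔ b = c ∨ k ∈ a := by
  simp [withParity]

lemma eq_of_withParity_eq {b c : Bool} {a a' : Set ℕ} (h : withParity b a = withParity c a') :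
    a = a' := by
  have hl (k : ℕ) : k ∈ a ↔ (!b) = c ∨ k ∈ a' := by
    rw [← bit_mem_withParity_iff, ← h, bit_mem_withParity_iff]
    simp
  have hr (k : ℕ) : k ∈ a' ↔ (!c) = b ∨ k ∈ a := by
    rw [← bit_mem_withParity_iff, h, bit_mem_withParity_iff]
    simp
  ext k
  cases b <;> cases c <;> simp_all

lemma Ultrafilter.exists_setOf_bodd_eq_mem (u : Ultrafilter ℕ) : ∃ b, {n | n.bodd = b} ∈ u := by
  rcases u.mem_or_compl_mem {n | n.bodd = true} with h | h
  · exact ⟨true, h⟩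
  · exact ⟨false, by simpa only [Set.compl_ofPred, Bool.not_eq_true] using h⟩

lemma exists_injective_forall_mem {ι : Type} (v : ι → Ultrafilter ℕ)
    (hι : Cardinal.mk ι ≤ Cardinal.continuum) :
    ∃ g : ι → Set ℕ, Function.Injective g ∧ ∀ i, g i ∈ v i := by
  obtain ⟨emb⟩ := (Cardinal.le_def _ _).mp (hι.trans_eq Cardinal.mk_set_nat.symm)
  choose b hb using fun i => (v i).exists_setOf_bodd_eq_mem
  exact ⟨fun i => withParity (b i) (emb i), fun i j h => emb.injective (eq_of_withParity_eq h),
    fun i => mem_of_superset (hb i) fun n hn => Or.inl hn⟩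

section Cardinality

open Cardinal

lemma injective_comp_range_prefixCode {u : Set ℕ → Ultrafilter ℕ}
    (hu : ∀ A : Set ℕ, A.Infinite → A ∈ u A ∧ IsFreeUltrafilter (u A)) :
    Function.Injective fun x => u (Set.range (prefixCode x)) := by
  intro x y (hxy : u _ = u _)
  by_contra hne
  have hx := hu _ (Set.infinite_range_of_injective (prefixCode_injective x))
  have hy := hu _ (Set.infinite_range_of_injective (prefixCode_injective y))
  refine hx.2.infinite_of_mem_s12 (inter_mem hx.1 ?_) (finite_range_prefixCode_inter hne)
  exact hxy ▸ hy.1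

lemma IsHS.mk_eq_continuum {X : Set (Ultrafilter ℕ)} (h : IsHS X) : #X = 𝔠 := by
  obtain ⟨u, hu, rfl⟩ := h
  have hsub : {v | ∃ A : Set ℕ, A.Infinite ∧ v = u A} ⊆ Set.range u :=
    fun _ ⟨A, _, hv⟩ => ⟨A, hv.symm⟩
  refine le_antisymm ?_ ?_
  · calc _ ≤ #↥(Set.range (pure : ℕ → Ultrafilter ℕ) ∪ Set.range u) :=
          mk_le_mk_of_subset (Set.union_subset_union_right _ hsub)
      _ ≤ #↥(Set.range (pure : ℕ → Ultrafilter ℕ)) + #↥(Set.range u) := mk_union_le _ _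
      _ ≤ ℵ₀ + 𝔠 :=
          add_le_add (mk_range_le.trans mk_le_aleph0) (mk_range_le.trans mk_set_nat.le)
      _ = 𝔠 := aleph0_add_continuum
  · rw [← mk_set_nat]
    refine mk_le_of_injective (f := fun x => ⟨u (Set.range (prefixCode x)),
      Or.inr ⟨_, Set.infinite_range_of_injective (prefixCode_injective x), rfl⟩⟩) ?_
    exact fun x y h => injective_comp_range_prefixCode hu (congrArg Subtype.val h)

lemma isHS_of_forall_infinite_nonempty_inter_remainder {X : Set (Ultrafilter ℕ)}
    (hX : ∀ n, pure n ∈ X) (hcard : #X ≤ 𝔠)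
    (h : ∀ A : Set ℕ, A.Infinite → (X ∩ remainder A).Nonempty) : IsHS X := by
  obtain ⟨g, hg, hgmem⟩ := exists_injective_forall_mem
    (Subtype.val : {y ∈ X | IsFreeUltrafilter y} → Ultrafilter ℕ)
    ((mk_le_mk_of_subset fun _ hy => hy.1).trans hcard)
  obtain ⟨u, hug, huε⟩ : ∃ u : Set ℕ → Ultrafilter ℕ, (∀ y, u (g y) = y) ∧
      ∀ A, (¬∃ y, g y = A) → u A = Classical.epsilon (· ∈ X ∩ remainder A) :=
    ⟨_, hg.extend_apply _ _, fun A hA => Function.extend_apply' _ _ A hA⟩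
  have hu (A : Set ℕ) (hA : A.Infinite) : u A ∈ X ∩ remainder A := by
    by_cases hAg : ∃ y, g y = A
    · obtain ⟨y, rfl⟩ := hAg
      rw [hug]
      exact ⟨y.2.1, hgmem y, y.2.2⟩
    · rw [huε A hAg]
      exact Classical.epsilon_spec (h A hA)
  refine ⟨u, fun A hA => (hu A hA).2, Set.Subset.antisymm (fun v hv => ?_) ?_⟩
  · by_cases hfree : IsFreeUltrafilter v
    · let y : {y ∈ X | IsFreeUltrafilter y} := ⟨v, hv, hfree⟩
      exact Or.inr ⟨g y, hfree.infinite_of_mem_s12 (hgmem y), (hug y).symm⟩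
    · obtain ⟨n, rfl⟩ : ∃ n, v = pure n := by simpa [IsFreeUltrafilter] using hfree
      exact Or.inl ⟨n, rfl⟩
  · rintro _ (⟨n, rfl⟩ | ⟨A, hA, rfl⟩)
    exacts [hX n, (hu A hA).1]

lemma isHS_iff {X : Set (Ultrafilter ℕ)} (hX : ∀ n, pure n ∈ X) :
    IsHS X ↔ #X = 𝔠 ∧ ∀ A : Set ℕ, A.Infinite → (X ∩ remainder A).Nonempty := by
  refine ⟨fun h => ⟨h.mk_eq_continuum, fun A hA => ?_⟩,
    fun ⟨hcard, h⟩ => isHS_of_forall_infinite_nonempty_inter_remainder hX hcard.le h⟩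
  obtain ⟨u, hu, rfl⟩ := h
  exact ⟨u A, Or.inr ⟨A, hA, rfl⟩, hu A hA⟩

end Cardinality

/-- For a subspace `X` of `βℕ` containing `ℕ`, the following are equivalent:
(1) `X ∈ HS`; (2) `X` is pseudocompact of cardinality continuum; (3) `X` has cardinality
continuum and every infinite `S ⊆ ℕ` has an accumulation point in `X`. -/
theorem stmt12 (X : Set (Ultrafilter ℕ))
    (hX : Set.range (pure : ℕ → Ultrafilter ℕ) ⊆ X) :
    (IsHS X ↔ (Pseudocompact ↥X ∧ Cardinal.mk ↥X = Cardinal.continuum)) ∧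
    (IsHS X ↔ (Cardinal.mk ↥X = Cardinal.continuum ∧
      ∀ S : Set ℕ, S.Infinite → ∃ x ∈ X,
        ∀ U : Set (Ultrafilter ℕ), IsOpen U → x ∈ U →
          (U ∩ ((pure : ℕ → Ultrafilter ℕ) '' S)).Infinite)) := by
  have hX' (n : ℕ) : pure n ∈ X := hX (Set.mem_range_self n)
  simp only [forall_isOpen_inter_image_pure_infinite_iff, ← Set.inter_nonempty_iff_exists_left]
  rw [isHS_iff hX', pseudocompact_iff_forall_infinite_nonempty_inter_remainder hX']
  exact ⟨and_comm, Iff.rfl⟩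
end

section
/- Let X = ℕ ∪ {u_A : A ⊆ ℕ infinite} be a space in the class HS such that for all distinct infinite A, B ⊆ ℕ the ultrafilters u_A and u_B are not isomorphic. Then the square X × X is not pseudocompact. -/
open Filter Topology

/-- Two ultrafilters on `ℕ` are isomorphic if one is the image of the other under a
bijection of `ℕ`. -/
def UltraIso (u v : Ultrafilter ℕ) : Prop :=
  ∃ f : ℕ → ℕ, Function.Bijective f ∧ Ultrafilter.map f u = v

/-!
Let `σ` swap `2k` and `2k + 1`. The isolated points `(n, σ n)` of `X × X` form a locally
finite family, so `Σ n · 𝟙_{(n, σ n)}` is continuous and unbounded. Local finiteness: every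
accumulation point in `βℕ × βℕ` lies on the closed graph of `v ↦ σ(v)` and has free
coordinates; in `X × X` these would be `u_A` and `u_B = σ(u_A)`, so `A = B` by
non-isomorphy, and `σ(u_A) = u_A` is impossible since `σ` exchanges evens and odds.
-/

theorem not_pseudocompact_of_locallyFinite {Y : Type*} [TopologicalSpace Y] {U : ℕ → Set Y}
    (hU : ∀ n, IsClopen (U n)) (hne : ∀ n, (U n).Nonempty) (hlf : LocallyFinite U) :
    ¬Pseudocompact Y := by
  intro hY
  let f : ℕ → Y → ℝ := fun n => (U n).indicator fun _ => n
  have hsupp : ∀ n, Function.support (f n) ⊆ U n := fun n => Set.support_indicator_subset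
  obtain ⟨M, hM⟩ := hY _ <| continuous_finsum
    (fun n => (hU n).continuous_indicator continuous_const) (hlf.subset hsupp)
  obtain ⟨n, hn⟩ := exists_nat_gt M
  obtain ⟨y, hy⟩ := hne n
  have hfy : (n : ℝ) ≤ ∑ᶠ k, f k y :=
    calc (n : ℝ) = f n y := (Set.indicator_of_mem hy fun _ => (n : ℝ)).symm
      _ ≤ ∑ᶠ k, f k y := single_le_finsum n
          ((hlf.point_finite y).subset fun k hk => hsupp k hk)
          fun k => Set.indicator_nonneg (fun _ _ => k.cast_nonneg) y
  linarith [le_abs_self (∑ᶠ k, f k y), hM y]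

theorem not_pseudocompact_of_isolated_of_finite_mem_nhds {Y Z : Type*} [TopologicalSpace Y]
    [TopologicalSpace Z] [T1Space Z] {g : Y → Z} (hg : Continuous g) {d : ℕ → Z}
    (hd : ∀ n, IsOpen {d n}) (hdg : ∀ n, d n ∈ Set.range g)
    (hfin : ∀ y, ∃ t ∈ 𝓝 (g y), {n | d n ∈ t}.Finite) : ¬Pseudocompact Y := by
  refine not_pseudocompact_of_locallyFinite (U := fun n => g ⁻¹' {d n})
    (fun n => ⟨isClosed_singleton.preimage hg, (hd n).preimage hg⟩) hdg fun y => ?_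
  obtain ⟨t, ht, htfin⟩ := hfin y
  refine ⟨g ⁻¹' t, hg.continuousAt ht, htfin.subset ?_⟩
  rintro n ⟨z, hz, hzt⟩
  show d n ∈ t
  rw [← Set.mem_singleton_iff.1 hz]
  exact hzt

namespace Ultrafilter

variable {α β : Type*}

theorem continuous_map (f : α → β) : Continuous (map f : Ultrafilter α → Ultrafilter β) :=
  ultrafilterBasis_is_basis.continuous_iff.2 <| by
    rintro _ ⟨s, rfl⟩
    exact ultrafilter_isOpen_basic (f ⁻¹' s)

theorem isOpen_singleton_pure_s13 (a : α) : IsOpen {(pure a : Ultrafilter α)} := by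
  convert ultrafilter_isOpen_basic {a}
  ext u
  refine ⟨fun h => by simp [Set.mem_singleton_iff.1 h], fun h => ?_⟩
  obtain ⟨x, hx, rfl⟩ := eq_pure_of_finite_mem (Set.finite_singleton a) h
  rw [Set.mem_singleton_iff.1 hx]
  rfl

theorem map_ne_self_of_mapsTo_compl {f : α → α} {u : Ultrafilter α} {s : Set α} (hs : s ∈ u)
    (hf : Set.MapsTo f s sᶜ) : map f u ≠ u := fun h =>
  compl_mem_iff_notMem.1 (h ▸ mem_map.2 (mem_of_superset hs hf)) hs

end Ultrafilter

def swapParity (n : ℕ) : ℕ := if n % 2 = 0 then n + 1 else n - 1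

theorem swapParity_involutive : Function.Involutive swapParity := by
  intro n; unfold swapParity; split_ifs <;> omega

theorem map_swapParity_ne_self (u : Ultrafilter ℕ) : u.map swapParity ≠ u := by
  have hmaps : ∀ r, Set.MapsTo swapParity {n | n % 2 = r} {n | n % 2 = r}ᶜ := by
    intro r n (hn : n % 2 = r) (h : swapParity n % 2 = r)
    unfold swapParity at h; split_ifs at h <;> omega
  rcases u.mem_or_compl_mem {n | n % 2 = 0} with h | h
  · exact Ultrafilter.map_ne_self_of_mapsTo_compl h (hmaps 0)
  · refine Ultrafilter.map_ne_self_of_mapsTo_compl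
      (mem_of_superset h fun n (hn : ¬n % 2 = 0) => ?_) (hmaps 1)
    show n % 2 = 1
    omega

theorem exists_mem_nhds_finite_swapParity {u : Set ℕ → Ultrafilter ℕ}
    (hiso : ∀ A B : Set ℕ, A.Infinite → B.Infinite → A ≠ B → ¬UltraIso (u A) (u B))
    {v w : Ultrafilter ℕ}
    (hv : v ∈ Set.range pure ∪ {v | ∃ A : Set ℕ, A.Infinite ∧ v = u A})
    (hw : w ∈ Set.range pure ∪ {v | ∃ A : Set ℕ, A.Infinite ∧ v = u A}) :
    ∃ t ∈ 𝓝 (v, w), {n | (pure n, pure (swapParity n)) ∈ t}.Finite := by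
  rcases hv with ⟨k, rfl⟩ | ⟨A, hA, rfl⟩
  · refine ⟨{pure k} ×ˢ Set.univ,
      prod_mem_nhds ((Ultrafilter.isOpen_singleton_pure_s13 k).mem_nhds rfl) univ_mem,
      (Set.finite_singleton k).subset fun n hn => Ultrafilter.pure_injective hn.1⟩
  rcases hw with ⟨m, rfl⟩ | ⟨B, hB, rfl⟩
  · refine ⟨Set.univ ×ˢ {pure m},
      prod_mem_nhds univ_mem ((Ultrafilter.isOpen_singleton_pure_s13 m).mem_nhds rfl),
      (Set.finite_singleton (swapParity m)).subset fun n hn => ?_⟩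
    rw [Set.mem_singleton_iff, ← Ultrafilter.pure_injective hn.2, swapParity_involutive]
  have hne : u B ≠ (u A).map swapParity := by
    intro h
    obtain rfl : A = B := by
      by_contra hAB
      exact hiso A B hA hB hAB ⟨swapParity, swapParity_involutive.bijective, h.symm⟩
    exact map_swapParity_ne_self (u A) h.symm
  have hgraph : IsClosed {p : Ultrafilter ℕ × Ultrafilter ℕ | p.2 = p.1.map swapParity} :=
    isClosed_eq continuous_snd ((Ultrafilter.continuous_map _).comp continuous_fst)
  refine ⟨_, hgraph.isOpen_compl.mem_nhds hne, Set.finite_empty.subset fun n hn => hn ?_⟩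
  exact (Ultrafilter.map_pure swapParity n).symm

theorem stmt13_general (u : Set ℕ → Ultrafilter ℕ)
    (hiso : ∀ A B : Set ℕ, A.Infinite → B.Infinite → A ≠ B → ¬UltraIso (u A) (u B))
    (X : Set (Ultrafilter ℕ))
    (hX : X = Set.range (pure : ℕ → Ultrafilter ℕ) ∪
      {v | ∃ A : Set ℕ, A.Infinite ∧ v = u A}) :
    ¬Pseudocompact (↥X × ↥X) := by
  subst hX
  have hpure : ∀ k, pure k ∈ Set.range pure ∪ {v | ∃ A : Set ℕ, A.Infinite ∧ v = u A} :=
    fun k => Or.inl ⟨k, rfl⟩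
  refine not_pseudocompact_of_isolated_of_finite_mem_nhds
    (continuous_subtype_val.prodMap continuous_subtype_val)
    (d := fun n => (pure n, pure (swapParity n))) (fun n => ?_)
    (fun n => ⟨(⟨_, hpure n⟩, ⟨_, hpure _⟩), rfl⟩)
    fun ⟨⟨v, hv⟩, ⟨w, hw⟩⟩ => exists_mem_nhds_finite_swapParity hiso hv hw
  rw [← Set.singleton_prod_singleton]
  exact (Ultrafilter.isOpen_singleton_pure_s13 _).prod (Ultrafilter.isOpen_singleton_pure_s13 _)

/-- If `X = ℕ ∪ {u_A : A ⊆ ℕ infinite}` is a space in the class HS (a subspace of `βℕ`,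
realized as `Ultrafilter ℕ`, with `ℕ` identified with the principal ultrafilters) such
that the ultrafilters `u_A`, `u_B` are non-isomorphic for distinct infinite `A, B ⊆ ℕ`,
then `X × X` is not pseudocompact. -/
theorem stmt13 (u : Set ℕ → Ultrafilter ℕ)
    (hu : ∀ A : Set ℕ, A.Infinite → A ∈ u A ∧ IsFreeUltrafilter (u A))
    (hiso : ∀ A B : Set ℕ, A.Infinite → B.Infinite → A ≠ B → ¬UltraIso (u A) (u B))
    (X : Set (Ultrafilter ℕ))
    (hX : X = Set.range (pure : ℕ → Ultrafilter ℕ) ∪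
      {v | ∃ A : Set ℕ, A.Infinite ∧ v = u A}) :
    ¬Pseudocompact (↥X × ↥X) :=
  stmt13_general u hiso X hX
end

section
/- Let (μ_n) be a JN-sequence on a Tychonoff space X. Then the union ⋃_n supp(μ_n) of the supports of the μ_n is a bounded subset of X, i.e., for every continuous f : X → ℝ the set f(⋃_n supp(μ_n)) is a bounded subset of ℝ. -/
/-!
Sliding hump. If `|f|` were unbounded on the supports, choose indices `n₀ < n₁ < ⋯`, points
`x_k ∈ supp μ_{n_k}` at which `|f|` exceeds its values on all earlier supports by more than `1`,
and continuous humps `g_k` with `μ_{n_k}(g_k) = 1` that vanish on all earlier supports and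
outside `{|f| > |f x_k| - 1}`; complete regularity provides `g_k` by separating `x_k` from the
closed set formed by the other (finitely many) support points and `{|f| ≤ |f x_k| - 1}`. Taking
`n_k` so late that `|μ_{n_k}(g₀ + ⋯ + g_{k-1})| < 1/2`, we get `|μ_{n_k}(g₀ + ⋯ + g_k)| ≥ 1/2`.
The humps form a locally finite family, so `g = ∑ g_k` is continuous, and `g = g₀ + ⋯ + g_k` on
`supp μ_{n_k}`; hence `|μ_{n_k}(g)| ≥ 1/2` for all `k`, contradicting `μ_n(g) → 0`.
-/

open Filter Topology

open Set

section Bumps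

variable {X : Type*} [TopologicalSpace X]

lemma locallyFinite_preimage_Ioi {ι : Type*} {F : X → ℝ} (hF : Continuous F) {a : ι → ℝ}
    (ha : Tendsto a cofinite atTop) : LocallyFinite fun i => F ⁻¹' Ioi (a i) := by
  intro x
  refine ⟨F ⁻¹' Iio (F x + 1), (isOpen_Iio.preimage hF).mem_nhds (lt_add_one (F x)), ?_⟩
  refine (eventually_cofinite.1 (ha.eventually_ge_atTop (F x + 1))).subset ?_
  rintro i ⟨y, hyi, hyx⟩
  simp only [mem_preimage, mem_Ioi, mem_Iio, mem_ofPred_eq, not_le] at hyi hyx ⊢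
  linarith

lemma exists_bump_of_mem_support [CompletelyRegularSpace X] [T1Space X] {F : X → ℝ}
    (hF : Continuous F) {ν : X →₀ ℝ} {x : X} (hx : x ∈ ν.support) {s : Finset X}
    (hxs : x ∉ s) :
    ∃ g : X → ℝ, Continuous g ∧ ∑ y ∈ ν.support, ν y * g y = 1 ∧ (∀ y ∈ s, g y = 0) ∧
      Function.support g ⊆ F ⁻¹' Ioi (F x - 1) := by
  classical
  set K : Set X := ↑((s ∪ ν.support).erase x) ∪ F ⁻¹' Iic (F x - 1)
  have hK : IsClosed K := (Finset.finite_toSet _).isClosed.union (isClosed_Iic.preimage hF)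
  have hxK : x ∉ K := by simp [K]
  obtain ⟨u, hu, hux, huK⟩ := CompletelyRegularSpace.completely_regular x K hK hxK
  set g : X → ℝ := fun y => (ν x)⁻¹ * (1 - u y)
  have hgK : ∀ y ∈ K, g y = 0 := fun y hy => by simp [g, huK hy]
  have hgs : ∀ y ∈ (s ∪ ν.support).erase x, g y = 0 := fun y hy => hgK y (Or.inl hy)
  refine ⟨g, by fun_prop, ?_, fun y hy => hgs y ?_, fun y hy => ?_⟩
  · rw [Finset.sum_eq_single_of_mem x hx fun y hy hne => by
      rw [hgs y (Finset.mem_erase.2 ⟨hne, Finset.mem_union_right _ hy⟩), mul_zero]]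
    simp [g, hux, Finsupp.mem_support_iff.1 hx]
  · exact Finset.mem_erase.2 ⟨ne_of_mem_of_not_mem hy hxs, Finset.mem_union_left _ hy⟩
  · by_contra hy'
    exact hy (hgK y (Or.inr (by simpa using hy')))

end Bumps

lemma frequently_exists_mem_support_lt {X : Type*} {μ : ℕ → X →₀ ℝ} {F : X → ℝ}
    (hF : ¬BddAbove (F '' ⋃ n, ((μ n).support : Set X))) (R : ℝ) :
    ∃ᶠ m in atTop, ∃ x ∈ (μ m).support, R < F x := by
  intro hev
  obtain ⟨N, hN⟩ := eventually_atTop.1 hev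
  have hfin : (⋃ n < N, ((μ n).support : Set X)).Finite :=
    (finite_lt_nat N).biUnion fun n _ => (μ n).support.finite_toSet
  refine hF (((hfin.image F).bddAbove.union (bddAbove_Iic (a := R))).mono ?_)
  rintro _ ⟨x, hx, rfl⟩
  obtain ⟨n, hn⟩ := mem_iUnion.1 hx
  rcases lt_or_ge n N with h | h
  · exact Or.inl ⟨x, mem_biUnion h hn, rfl⟩
  · exact Or.inr (not_lt.1 fun hR => hN n h ⟨x, hn, hR⟩)

section SlidingHump

variable {X : Type*} [TopologicalSpace X] {μ : ℕ → X →₀ ℝ} {F : X → ℝ}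

-- Stage `k`: `g` is the hump `g_k` peaking at `x = x_k`, `G = g₀ + ⋯ + g_k`, and `s` contains
-- the supports of `μ_{n₀}, …, μ_{n_k}`.
structure HumpStage (μ : ℕ → X →₀ ℝ) (F : X → ℝ) where
  n : ℕ
  x : X
  g : X → ℝ
  G : X → ℝ
  s : Finset X
  x_mem : x ∈ s
  support_subset : (μ n).support ⊆ s
  continuous_g : Continuous g
  continuous_G : Continuous G
  support_g_subset : Function.support g ⊆ F ⁻¹' Ioi (F x - 1)
  half_le_abs_sum : 1 / 2 ≤ |∑ y ∈ (μ n).support, μ n y * G y|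

lemma HumpStage.exists_next [CompletelyRegularSpace X] [T1Space X]
    (hμ : ∀ h : X → ℝ, Continuous h →
      Tendsto (fun n => ∑ x ∈ (μ n).support, μ n x * h x) atTop (𝓝 0))
    (hfreq : ∀ R, ∃ᶠ m in atTop, ∃ x ∈ (μ m).support, R < F x) (hF : Continuous F)
    {G₀ : X → ℝ} (hG₀ : Continuous G₀) (s₀ : Finset X) (N : ℕ) :
    ∃ d : HumpStage μ F, N < d.n ∧ (∀ y ∈ s₀, F y + 1 < F d.x) ∧ s₀ ⊆ d.s ∧
      (∀ y ∈ s₀, d.g y = 0) ∧ d.G = G₀ + d.g := by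
  classical
  obtain ⟨R, hR⟩ := (s₀.finite_toSet.image F).bddAbove
  have hsmall : ∀ᶠ m in atTop, ∑ y ∈ (μ m).support, μ m y * G₀ y ∈ Ioo (-1 / 2 : ℝ) (1 / 2) :=
    hμ G₀ hG₀ (Ioo_mem_nhds (by norm_num) (by norm_num))
  obtain ⟨m, hm, ⟨x, hx, hRx⟩, hsm⟩ :=
    frequently_atTop.1 ((hfreq (R + 1)).and_eventually hsmall) (N + 1)
  have hFs : ∀ y ∈ s₀, F y + 1 < F x := fun y hy => by linarith [hR (mem_image_of_mem F hy)]
  have hxs : x ∉ s₀ := fun h => by linarith [hFs x h]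
  obtain ⟨g, hg, hg1, hgs, hgF⟩ := exists_bump_of_mem_support hF hx hxs
  have hsum : ∑ y ∈ (μ m).support, μ m y * (G₀ + g) y
      = ∑ y ∈ (μ m).support, μ m y * G₀ y + 1 := by
    simp only [Pi.add_apply, mul_add, Finset.sum_add_distrib, hg1]
  refine ⟨⟨m, x, g, G₀ + g, s₀ ∪ (μ m).support, Finset.mem_union_right _ hx,
    Finset.subset_union_right, hg, hG₀.add hg, hgF, ?_⟩,
    hm, hFs, Finset.subset_union_left, hgs, rfl⟩
  rw [hsum]
  exact le_abs.2 (Or.inl (by linarith [hsm.1]))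

structure HumpChain (μ : ℕ → X →₀ ℝ) (F : X → ℝ) where
  stage : ℕ → HumpStage μ F
  G_zero : (stage 0).G = (stage 0).g
  n_lt_succ : ∀ k, (stage k).n < (stage (k + 1)).n
  lt_F_x_succ : ∀ k, ∀ y ∈ (stage k).s, F y + 1 < F (stage (k + 1)).x
  s_subset_succ : ∀ k, (stage k).s ⊆ (stage (k + 1)).s
  g_succ_eq_zero : ∀ k, ∀ y ∈ (stage k).s, (stage (k + 1)).g y = 0
  G_succ : ∀ k, (stage (k + 1)).G = (stage k).G + (stage (k + 1)).g

lemma HumpChain.nonempty [CompletelyRegularSpace X] [T1Space X]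
    (hμ : ∀ h : X → ℝ, Continuous h →
      Tendsto (fun n => ∑ x ∈ (μ n).support, μ n x * h x) atTop (𝓝 0))
    (hfreq : ∀ R, ∃ᶠ m in atTop, ∃ x ∈ (μ m).support, R < F x) (hF : Continuous F) :
    Nonempty (HumpChain μ F) := by
  choose next hnext using fun p : HumpStage μ F =>
    HumpStage.exists_next hμ hfreq hF p.continuous_G p.s p.n
  obtain ⟨d₀, -, -, -, -, hG⟩ := HumpStage.exists_next hμ hfreq hF continuous_zero ∅ 0
  exact ⟨{ stage := fun k => Nat.rec d₀ (fun _ p => next p) k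
           G_zero := hG.trans (zero_add _)
           n_lt_succ := fun k => (hnext _).1
           lt_F_x_succ := fun k => (hnext _).2.1
           s_subset_succ := fun k => (hnext _).2.2.1
           g_succ_eq_zero := fun k => (hnext _).2.2.2.1
           G_succ := fun k => (hnext _).2.2.2.2 }⟩

namespace HumpChain

variable (c : HumpChain μ F)

lemma n_strictMono : StrictMono fun k => (c.stage k).n :=
  strictMono_nat_of_lt_succ c.n_lt_succ

lemma s_mono : Monotone fun k => (c.stage k).s :=
  monotone_nat_of_le_succ c.s_subset_succ

lemma F_x_add_le (k : ℕ) : F (c.stage 0).x + k ≤ F (c.stage k).x := by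
  induction k with
  | zero => simp
  | succ k ih =>
    push_cast
    linarith [c.lt_F_x_succ k _ (c.stage k).x_mem]

lemma locallyFinite_support_g (hF : Continuous F) :
    LocallyFinite fun k => Function.support (c.stage k).g := by
  have ha : Tendsto (fun k => F (c.stage k).x - 1) cofinite atTop := by
    rw [Nat.cofinite_eq_atTop]
    refine tendsto_atTop_mono (fun k => ?_)
      (tendsto_atTop_add_const_left _ (F (c.stage 0).x - 1) tendsto_natCast_atTop_atTop)
    linarith [c.F_x_add_le k]
  exact (locallyFinite_preimage_Ioi hF ha).subset fun k => (c.stage k).support_g_subset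

lemma continuous_finsum_g (hF : Continuous F) : Continuous fun y => ∑ᶠ k, (c.stage k).g y :=
  continuous_finsum (fun k => (c.stage k).continuous_g) (c.locallyFinite_support_g hF)

lemma G_eq_sum (k : ℕ) : (c.stage k).G = ∑ j ∈ Finset.range (k + 1), (c.stage j).g := by
  induction k with
  | zero => simp [c.G_zero]
  | succ k ih => rw [c.G_succ, ih, Finset.sum_range_succ _ (k + 1)]

lemma g_eq_zero_of_lt {j k : ℕ} (hkj : k < j) {y : X} (hy : y ∈ (c.stage k).s) :
    (c.stage j).g y = 0 := by
  obtain ⟨i, rfl⟩ := Nat.exists_eq_add_of_lt hkj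
  exact c.g_succ_eq_zero _ y (c.s_mono (Nat.le_add_right k i) hy)

lemma finsum_g_eq_G {k : ℕ} {y : X} (hy : y ∈ (c.stage k).s) :
    ∑ᶠ j, (c.stage j).g y = (c.stage k).G y := by
  rw [c.G_eq_sum, Finset.sum_apply, finsum_eq_sum_of_support_subset]
  intro j hj
  simp only [Finset.coe_range, mem_Iio]
  by_contra h
  exact hj (c.g_eq_zero_of_lt (by omega) hy)

lemma not_tendsto :
    ¬Tendsto (fun n => ∑ y ∈ (μ n).support, μ n y * ∑ᶠ j, (c.stage j).g y) atTop (𝓝 0) := by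
  intro h
  obtain ⟨k, hk⟩ := ((h.comp c.n_strictMono.tendsto_atTop).eventually
    (eventually_abs_sub_lt 0 (by norm_num : (0 : ℝ) < 1 / 2))).exists
  have hG : ∑ y ∈ (μ (c.stage k).n).support, μ (c.stage k).n y * ∑ᶠ j, (c.stage j).g y
      = ∑ y ∈ (μ (c.stage k).n).support, μ (c.stage k).n y * (c.stage k).G y :=
    Finset.sum_congr rfl fun y hy => by rw [c.finsum_g_eq_G ((c.stage k).support_subset hy)]
  simp only [Function.comp_apply, sub_zero, hG] at hk
  linarith [(c.stage k).half_le_abs_sum]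

end HumpChain

end SlidingHump

/-- The union of the supports of a JN-sequence on a Tychonoff space `X` is a bounded
subset of `X`: every continuous real-valued function on `X` is bounded on it. -/
theorem stmt16 (X : Type*) [TopologicalSpace X] [CompletelyRegularSpace X] [T2Space X]
    (μ : ℕ → (X →₀ ℝ)) (hμ : IsJNSeq μ) :
    ∀ f : X → ℝ, Continuous f →
      ∃ M : ℝ, ∀ x ∈ ⋃ n, ((μ n).support : Set X), |f x| ≤ M := by
  intro f hf
  by_contra hunb
  have hfreq := frequently_exists_mem_support_lt (μ := μ) (F := fun x => |f x|)
    (by simpa [bddAbove_def] using hunb)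
  obtain ⟨c⟩ := HumpChain.nonempty hμ.2 hfreq hf.abs
  exact c.not_tendsto (hμ.2 _ (c.continuous_finsum_g hf.abs))
end

section
/- Let E and F be nonempty finite subsets of a set X and let μ : X × X → ℝ be a function (a signed measure on E × F). Then there exist disjoint sets G ⊆ E and H ⊆ F such that ∑_{(x,y) ∈ G × H} |μ(x,y)| ≥ (1/6) · ∑_{(x,y) ∈ E × F, x ≠ y} |μ(x,y)|. -/
/-!
Probabilistic method: cut `E ∪ F` by a uniformly random subset `S` and take `G = E ∩ S`,
`H = F \ S`. An off-diagonal pair `(x, y)` lies in `G × H` exactly when `x ∈ S` and `y ∉ S`,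
which happens for a quarter of all `S`, so on average `|μ|(G × H)` is a quarter of the
off-diagonal mass, and some `S` does at least as well as the average.
-/

open Finset

theorem card_powerset_filter_mem_notMem {X : Type*} [DecidableEq X] {T : Finset X} {x y : X}
    (hx : x ∈ T) (hy : y ∈ T) (hxy : x ≠ y) :
    #{S ∈ T.powerset | x ∈ S ∧ y ∉ S} = 2 ^ (#T - 2) := by
  have hR : {S ∈ T.powerset | x ∈ S ∧ y ∉ S} =
      ((T.erase x).erase y).powerset.image (insert x) := by
    ext S
    simp only [mem_filter, mem_powerset, mem_image]
    constructor
    · rintro ⟨hST, hxS, hyS⟩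
      refine ⟨S.erase x, ?_, insert_erase hxS⟩
      intro z hz
      simp only [mem_erase] at hz ⊢
      exact ⟨fun h => hyS (h ▸ hz.2), hz.1, hST hz.2⟩
    · rintro ⟨A, hA, rfl⟩
      have hAT : A ⊆ T := (hA.trans (erase_subset _ _)).trans (erase_subset _ _)
      refine ⟨insert_subset hx hAT, mem_insert_self _ _, ?_⟩
      simp only [mem_insert, not_or]
      exact ⟨Ne.symm hxy, fun h => by simpa using hA h⟩
  rw [hR, card_image_of_injOn, card_powerset, card_erase_of_mem (mem_erase.2 ⟨hxy.symm, hy⟩),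
    card_erase_of_mem hx, Nat.sub_sub]
  intro A hA B hB h
  simp only [coe_powerset, Set.mem_preimage, Set.mem_powerset_iff, coe_subset] at hA hB
  have hxA : x ∉ A := fun h => by simpa using hA h
  have hxB : x ∉ B := fun h => by simpa using hB h
  simpa [erase_insert hxA, erase_insert hxB] using congrArg (erase · x) h

theorem sum_powerset_sum_cut {X M : Type*} [DecidableEq X] [AddCommMonoid M] {E F T : Finset X}
    (hE : E ⊆ T) (hF : F ⊆ T) (w : X × X → M) :
    ∑ S ∈ T.powerset, ∑ q ∈ (E ∩ S) ×ˢ (F \ S), w q =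
      2 ^ (#T - 2) • ∑ q ∈ E ×ˢ F with q.1 ≠ q.2, w q := by
  have hcut : ∀ S, (E ∩ S) ×ˢ (F \ S) = {q ∈ E ×ˢ F | q.1 ∈ S ∧ q.2 ∉ S} := by
    intro S; ext q; simp only [mem_product, mem_inter, mem_sdiff, mem_filter]; tauto
  calc ∑ S ∈ T.powerset, ∑ q ∈ (E ∩ S) ×ˢ (F \ S), w q
      = ∑ q ∈ E ×ˢ F, #{S ∈ T.powerset | q.1 ∈ S ∧ q.2 ∉ S} • w q := by
        simp_rw [hcut, sum_filter]
        rw [sum_comm]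
        simp_rw [← sum_filter, sum_const]
    _ = ∑ q ∈ E ×ˢ F, if q.1 ≠ q.2 then 2 ^ (#T - 2) • w q else 0 := by
        refine sum_congr rfl fun q hq => ?_
        rw [mem_product] at hq
        by_cases hdiag : q.1 = q.2
        · simp [hdiag]
        · rw [if_pos hdiag, card_powerset_filter_mem_notMem (hE hq.1) (hF hq.2) hdiag]
    _ = 2 ^ (#T - 2) • ∑ q ∈ E ×ˢ F with q.1 ≠ q.2, w q := by
        rw [smul_sum, sum_filter]

theorem exists_subset_quarter_le_sum_cut {X : Type*} [DecidableEq X] (E F : Finset X)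
    (w : X × X → ℝ) (hw : ∀ q, 0 ≤ w q) :
    ∃ S ⊆ E ∪ F, (1 / 4 : ℝ) * ∑ q ∈ E ×ˢ F with q.1 ≠ q.2, w q ≤
      ∑ q ∈ (E ∩ S) ×ˢ (F \ S), w q := by
  set n := #(E ∪ F)
  -- with truncated subtraction this also holds for `n < 2`
  have hpow : (2 : ℝ) ^ n ≤ 2 ^ (n - 2) * 4 := by
    rw [show (4 : ℝ) = 2 ^ 2 by norm_num, ← pow_add]
    exact pow_le_pow_right₀ one_le_two (by omega)
  have htotal : 0 ≤ ∑ q ∈ E ×ˢ F with q.1 ≠ q.2, w q := sum_nonneg fun q _ => hw q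
  have havg : ∑ _S ∈ (E ∪ F).powerset, (1 / 4 : ℝ) * ∑ q ∈ E ×ˢ F with q.1 ≠ q.2, w q ≤
      ∑ S ∈ (E ∪ F).powerset, ∑ q ∈ (E ∩ S) ×ˢ (F \ S), w q := by
    rw [sum_powerset_sum_cut subset_union_left subset_union_right, sum_const, card_powerset,
      nsmul_eq_mul, nsmul_eq_mul]
    push_cast
    nlinarith
  obtain ⟨S, hS, hle⟩ := exists_le_of_sum_le ⟨∅, empty_mem_powerset _⟩ havg
  exact ⟨S, mem_powerset.1 hS, hle⟩

theorem stmt17_general {X : Type*} [DecidableEq X] (E F : Finset X)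
    (μ : X × X → ℝ) :
    ∃ G H : Finset X, G ⊆ E ∧ H ⊆ F ∧ Disjoint G H ∧
      (1 / 6 : ℝ) * ∑ p ∈ (E ×ˢ F).filter (fun p => p.1 ≠ p.2), |μ p| ≤
        ∑ p ∈ G ×ˢ H, |μ p| := by
  obtain ⟨S, -, hS⟩ :=
    exists_subset_quarter_le_sum_cut E F (fun p => |μ p|) fun p => abs_nonneg _
  refine ⟨E ∩ S, F \ S, inter_subset_left, sdiff_subset,
    disjoint_sdiff.mono_left inter_subset_right, ?_⟩
  have htotal : 0 ≤ ∑ p ∈ (E ×ˢ F).filter (fun p => p.1 ≠ p.2), |μ p| :=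
    sum_nonneg fun p _ => abs_nonneg _
  linarith

/-- Given nonempty finite sets `E, F ⊆ X` and a signed measure `μ` on `E × F` (identified
with a real-valued function on `X × X`), there are disjoint `G ⊆ E` and `H ⊆ F` with
`|μ|(G × H) ≥ |μ|((E × F) \ Δ_X) / 6`. -/
theorem stmt17 {X : Type*} [DecidableEq X] (E F : Finset X)
    (hE : E.Nonempty) (hF : F.Nonempty) (μ : X × X → ℝ) :
    ∃ G H : Finset X, G ⊆ E ∧ H ⊆ F ∧ Disjoint G H ∧
      (1 / 6 : ℝ) * ∑ p ∈ (E ×ˢ F).filter (fun p => p.1 ≠ p.2), |μ p| ≤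
        ∑ p ∈ G ×ˢ H, |μ p| :=
  stmt17_general E F μ
end
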